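/- arXiv:1909.06707 — 8 statements merged into one kernel-verified Lean document; each statement's English description precedes it below -/
import Mathlib

section
/- For every n ≥ 2, the polynomial q(x_1,…,x_n) = (1 + x_1 + x_2 + ⋯ + x_n)^2 is a sum of squares of real polynomials but is not a sum of nonnegative circuit polynomials. In particular, Σ_{n,2} ⊄ C_{n,2} for all n ≥ 2. -/
open MvPolynomial Finset

noncomputable section

/-- The exponent vector of a monomial, viewed as a point of `ℝ^n`. -/
def expVec (n : ℕ) (e : Fin n →₀ ℕ) : Fin n → ℝ := fun i => (e i : ℝ)

/-- `IsCircuitWith n f r α β lam` says that `f` is a circuit polynomial in `n` variables with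
outer exponents `α 0, …, α r` (the vertices of a simplex, all even), inner exponent `β`, and
barycentric coordinates `lam` (all positive, summing to `1`, with `β = ∑ lam j • α j`);
the coefficients at the outer exponents are positive and the support of `f` is contained in
the circuit. -/
def IsCircuitWith (n : ℕ) (f : MvPolynomial (Fin n) ℝ) (r : ℕ)
    (α : Fin (r + 1) → (Fin n →₀ ℕ)) (β : Fin n →₀ ℕ) (lam : Fin (r + 1) → ℝ) : Prop :=
  r ≤ n ∧
  (∀ j i, Even (α j i)) ∧
  AffineIndependent ℝ (fun j => expVec n (α j)) ∧
  (∀ j, 0 < lam j) ∧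
  (∑ j, lam j) = 1 ∧
  (∀ i, (β i : ℝ) = ∑ j, lam j * ((α j) i : ℝ)) ∧
  (∀ j, 0 < f.coeff (α j)) ∧
  (f.support : Set (Fin n →₀ ℕ)) ⊆ Set.range α ∪ {β}

/-- `f` is a circuit polynomial. -/
def IsCircuit (n : ℕ) (f : MvPolynomial (Fin n) ℝ) : Prop :=
  ∃ r α β lam, IsCircuitWith n f r α β lam

/-- The circuit number `Θ_f = ∏ (f_{α(j)}/λ_j)^{λ_j}`. -/
def circuitNumber (n : ℕ) (f : MvPolynomial (Fin n) ℝ) (r : ℕ)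
    (α : Fin (r + 1) → (Fin n →₀ ℕ)) (lam : Fin (r + 1) → ℝ) : ℝ :=
  ∏ j, Real.rpow (f.coeff (α j) / lam j) (lam j)

/-- `p` is a sum of nonnegative circuit polynomials (SONC). -/
def IsSONC (n : ℕ) (p : MvPolynomial (Fin n) ℝ) : Prop :=
  ∃ (k : ℕ) (μ : Fin k → ℝ) (g : Fin k → MvPolynomial (Fin n) ℝ),
    (∀ i, 0 ≤ μ i) ∧ (∀ i, IsCircuit n (g i)) ∧
    (∀ i, ∀ x : Fin n → ℝ, 0 ≤ eval x (g i)) ∧ p = ∑ i, μ i • g i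

/-- The SONC cone `C_{n,D}`. -/
def soncCone (n D : ℕ) : Set (MvPolynomial (Fin n) ℝ) :=
  {p | IsSONC n p ∧ p.totalDegree ≤ D}

/-- The nonnegativity cone `P_{n,D}`. -/
def posCone (n D : ℕ) : Set (MvPolynomial (Fin n) ℝ) :=
  {p | (∀ x : Fin n → ℝ, 0 ≤ eval x p) ∧ p.totalDegree ≤ D}

/-- The SOS cone `Σ_{n,D}`. -/
def sosCone (n D : ℕ) : Set (MvPolynomial (Fin n) ℝ) :=
  {p | (∃ (k : ℕ) (g : Fin k → MvPolynomial (Fin n) ℝ), p = ∑ i, (g i) ^ 2) ∧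
    p.totalDegree ≤ D}

/-- A sum of monomial squares: every term `c·x^α` has `c > 0` and `α` even. -/
def IsSumMonomialSquares (n : ℕ) (f : MvPolynomial (Fin n) ℝ) : Prop :=
  ∀ m ∈ f.support, 0 < f.coeff m ∧ ∀ i, Even (m i)

/-- A polynomial is nondegenerate if its Newton polytope is full-dimensional. -/
def Nondegenerate (n : ℕ) (f : MvPolynomial (Fin n) ℝ) : Prop :=
  affineSpan ℝ (expVec n '' (f.support : Set (Fin n →₀ ℕ))) = ⊤

/-- Homogenization of `p` to degree `D`, with the new variable at index `0`. -/
def homogenize (n D : ℕ) (p : MvPolynomial (Fin n) ℝ) : MvPolynomial (Fin (n + 1)) ℝ :=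
  ∑ m ∈ p.support, monomial (Finsupp.cons (D - m.sum fun _ e => e) m) (p.coeff m)

/-- The projective zero set of a form in `n` variables. -/
def projZeros (n : ℕ) (p : MvPolynomial (Fin n) ℝ) :
    Set (Projectivization ℝ (Fin n → ℝ)) :=
  {x | eval x.rep p = 0}

/-- The affine zeros of `f` with all coordinates nonzero. -/
def affZerosStar (n : ℕ) (f : MvPolynomial (Fin n) ℝ) : Set (Fin n → ℝ) :=
  {x | (∀ i, x i ≠ 0) ∧ eval x f = 0}

end


-- ===== auxiliary lemmas =====
namespace SONCAux
open MvPolynomial Finset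

lemma expVec_inj (n : ℕ) : Function.Injective (expVec n) := by
  intro a b h
  ext i
  have h2 : ((a i : ℝ)) = (b i : ℝ) := congrFun h i
  exact_mod_cast h2


lemma eval_split {n : ℕ} (g : MvPolynomial (Fin n) ℝ) {r : ℕ}
    (α : Fin (r+1) → (Fin n →₀ ℕ)) (β : Fin n →₀ ℕ)
    (hinj : Function.Injective α) (hβ : β ∉ Set.range α)
    (hsupp : (g.support : Set (Fin n →₀ ℕ)) ⊆ Set.range α ∪ {β}) (x : Fin n → ℝ) :
    eval x g = (∑ j, g.coeff (α j) * ∏ i, x i ^ (α j) i) + g.coeff β * ∏ i, x i ^ β i := by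
  rw [eval_eq']
  have hsub : g.support ⊆ (Finset.image α univ) ∪ {β} := by
    intro m hm
    rcases hsupp (by exact_mod_cast hm) with ⟨j, rfl⟩ | h
    · exact Finset.mem_union_left _ (Finset.mem_image_of_mem α (mem_univ j))
    · exact Finset.mem_union_right _ (by simpa using h)
  rw [Finset.sum_subset hsub (by intro m _ hm; rw [notMem_support_iff.mp hm, zero_mul])]
  rw [Finset.sum_union (by
    simp only [Finset.disjoint_singleton_right, Finset.mem_image]
    rintro ⟨j, -, rfl⟩
    exact hβ ⟨j, rfl⟩)]
  rw [Finset.sum_image (fun a _ b _ h => hinj h), Finset.sum_singleton]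

lemma ratio_core {n r : ℕ} (g : MvPolynomial (Fin n) ℝ)
    (α : Fin (r+1) → (Fin n →₀ ℕ)) (β : Fin n →₀ ℕ)
    (hinj : Function.Injective α) (hβ : β ∉ Set.range α)
    (hsupp : (g.support : Set (Fin n →₀ ℕ)) ⊆ Set.range α ∪ {β})
    (hev : ∀ j i, Even (α j i)) (hpos : ∀ j, 0 < g.coeff (α j))
    (hnn : ∀ x : Fin n → ℝ, 0 ≤ eval x g)
    (x y : Fin n → ℝ) (hx : ∀ i, x i < 0) (hy : ∀ i, y i < 0)
    (hgx : eval x g = 0) (hgy : eval y g = 0) :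
    ∀ m ∈ g.support, ∀ m' ∈ g.support,
      (∏ i, x i ^ m i) * (∏ i, y i ^ m' i) = (∏ i, x i ^ m' i) * (∏ i, y i ^ m i) := by
  set a : Fin (r+1) → ℝ := fun j => g.coeff (α j) with ha
  set b : ℝ := g.coeff β with hb
  set P : Fin (r+1) → ℝ := fun j => ∏ i, x i ^ (α j) i with hP
  set Q : Fin (r+1) → ℝ := fun j => ∏ i, y i ^ (α j) i with hQ
  set X : ℝ := ∏ i, x i ^ β i with hX
  set Y : ℝ := ∏ i, y i ^ β i with hY
  set A : ℝ := ∑ j, a j * P j with hA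
  set B : ℝ := ∑ j, a j * Q j with hB
  have hxne : ∀ i, x i ≠ 0 := fun i => (hx i).ne
  have hyne : ∀ i, y i ≠ 0 := fun i => (hy i).ne
  have hPpos : ∀ j, 0 < P j := fun j => Finset.prod_pos fun i _ => (hev j i).pow_pos (hxne i)
  have hQpos : ∀ j, 0 < Q j := fun j => Finset.prod_pos fun i _ => (hev j i).pow_pos (hyne i)
  have hApos : 0 < A := Finset.sum_pos (fun j _ => mul_pos (hpos j) (hPpos j)) univ_nonempty
  have hBpos : 0 < B := Finset.sum_pos (fun j _ => mul_pos (hpos j) (hQpos j)) univ_nonempty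
  have hbX : b * X = -A := by
    have h := eval_split g α β hinj hβ hsupp x
    rw [hgx] at h
    rw [hA]; rw [hb, hX]; linarith [h]
  have hbY : b * Y = -B := by
    have h := eval_split g α β hinj hβ hsupp y
    rw [hgy] at h
    rw [hB]; rw [hb, hY]; linarith [h]
  have hbne : b ≠ 0 := by
    intro h; rw [h, zero_mul] at hbX; linarith
  set z : Fin n → ℝ := fun i => -Real.sqrt (x i * y i) with hzdef
  have hxy : ∀ i, 0 < x i * y i := fun i => mul_pos_of_neg_of_neg (hx i) (hy i)
  have hzneg : ∀ i, z i < 0 := fun i => neg_neg_iff_pos.mpr (Real.sqrt_pos.mpr (hxy i))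
  have hzne : ∀ i, z i ≠ 0 := fun i => (hzneg i).ne
  have hz2 : ∀ i, z i ^ 2 = x i * y i := by
    intro i
    have : z i ^ 2 = Real.sqrt (x i * y i) ^ 2 := by rw [hzdef]; ring
    rw [this, Real.sq_sqrt (hxy i).le]
  have sq_pw : ∀ m : Fin n →₀ ℕ,
      (∏ i, z i ^ m i) ^ 2 = (∏ i, x i ^ m i) * (∏ i, y i ^ m i) := by
    intro m
    rw [← Finset.prod_pow, ← Finset.prod_mul_distrib]
    refine Finset.prod_congr rfl fun i _ => ?_
    rw [← pow_mul, mul_comm (m i) 2, pow_mul, hz2, mul_pow]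
  set P' : Fin (r+1) → ℝ := fun j => ∏ i, z i ^ (α j) i with hP'
  have hP'pos : ∀ j, 0 < P' j := fun j => Finset.prod_pos fun i _ => (hev j i).pow_pos (hzne i)
  have hP'eq : ∀ j, P' j = Real.sqrt (P j * Q j) := by
    intro j
    rw [hP, hQ, ← sq_pw (α j), Real.sqrt_sq (hP'pos j).le]
  set Z : ℝ := ∏ i, z i ^ β i with hZ
  have hZsq : Z ^ 2 = X * Y := sq_pw β
  have hbZsq : (b * Z) ^ 2 = A * B := by
    have h : (b*Z)^2 = (b*X)*(b*Y) := by rw [mul_pow, hZsq]; ring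
    rw [h, hbX, hbY]; ring
  have hZXpos : 0 < Z * X := by
    rw [hZ, hX, ← Finset.prod_mul_distrib]
    refine Finset.prod_pos fun i _ => ?_
    rw [← mul_pow]
    exact pow_pos (mul_pos_of_neg_of_neg (hzneg i) (hx i)) _
  have hbZneg : b * Z < 0 := by
    have h1 : 0 < (b*Z)*(b*X) := by
      have e : (b*Z)*(b*X) = b^2 * (Z*X) := by ring
      rw [e]
      exact mul_pos (by positivity) hZXpos
    by_contra hcon
    push_neg at hcon
    rw [hbX] at h1
    nlinarith [mul_nonneg hcon hApos.le]
  have hbZ : b * Z = -Real.sqrt (A * B) := by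
    have h := Real.sqrt_sq_eq_abs (b * Z)
    rw [hbZsq] at h
    rw [h, abs_of_neg hbZneg, neg_neg]
  set S : ℝ := ∑ j, a j * Real.sqrt (P j * Q j) with hS
  have hevalz : 0 ≤ S - Real.sqrt (A * B) := by
    have h := hnn z
    rw [eval_split g α β hinj hβ hsupp z] at h
    have e : (∑ j, a j * P' j) = S := Finset.sum_congr rfl fun j _ => by rw [hP'eq]
    calc (0:ℝ) ≤ (∑ j, a j * P' j) + b * Z := h
      _ = S - Real.sqrt (A*B) := by rw [e, hbZ]; ring
  have hsqrtAB : Real.sqrt (A*B) * Real.sqrt (A*B) = A*B :=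
    Real.mul_self_sqrt (by positivity)
  have hdsq : ∀ j, (Real.sqrt B * Real.sqrt (a j * P j) - Real.sqrt A * Real.sqrt (a j * Q j))^2
      = B * (a j * P j) + A * (a j * Q j)
        - 2 * Real.sqrt (A*B) * (a j * Real.sqrt (P j * Q j)) := by
    intro j
    have haP : (0:ℝ) ≤ a j * P j := (mul_pos (hpos j) (hPpos j)).le
    have haQ : (0:ℝ) ≤ a j * Q j := (mul_pos (hpos j) (hQpos j)).le
    have e1 : Real.sqrt (a j * P j) ^ 2 = a j * P j := Real.sq_sqrt haP
    have e2 : Real.sqrt (a j * Q j) ^ 2 = a j * Q j := Real.sq_sqrt haQ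
    have eB : Real.sqrt B ^ 2 = B := Real.sq_sqrt hBpos.le
    have eA : Real.sqrt A ^ 2 = A := Real.sq_sqrt hApos.le
    have e3 : Real.sqrt (a j * P j) * Real.sqrt (a j * Q j) = a j * Real.sqrt (P j * Q j) := by
      rw [← Real.sqrt_mul haP]
      have e : a j * P j * (a j * Q j) = (a j)^2 * (P j * Q j) := by ring
      rw [e, Real.sqrt_mul (sq_nonneg _), Real.sqrt_sq (hpos j).le]
    have e4 : Real.sqrt A * Real.sqrt B = Real.sqrt (A*B) := (Real.sqrt_mul hApos.le B).symm
    have expand : (Real.sqrt B * Real.sqrt (a j * P j) - Real.sqrt A * Real.sqrt (a j * Q j))^2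
        = (Real.sqrt B)^2 * (Real.sqrt (a j*P j))^2 + (Real.sqrt A)^2*(Real.sqrt (a j*Q j))^2
          - 2*(Real.sqrt A * Real.sqrt B)*(Real.sqrt (a j*P j) * Real.sqrt (a j*Q j)) := by
      ring
    rw [expand, e1, e2, eA, eB, e4, e3]
  have hsum0 : ∑ j, (Real.sqrt B * Real.sqrt (a j * P j) - Real.sqrt A * Real.sqrt (a j * Q j))^2 = 0 := by
    apply le_antisymm _ (Finset.sum_nonneg fun j _ => sq_nonneg _)
    have expand : ∑ j, (Real.sqrt B * Real.sqrt (a j * P j) - Real.sqrt A * Real.sqrt (a j * Q j))^2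
        = B * A + A * B - 2 * Real.sqrt (A*B) * S := by
      rw [Finset.sum_congr rfl (fun j _ => hdsq j)]
      rw [Finset.sum_sub_distrib, Finset.sum_add_distrib, ← Finset.mul_sum, ← Finset.mul_sum,
        ← Finset.mul_sum, ← hA, ← hB, ← hS]
    rw [expand]
    nlinarith [mul_nonneg (Real.sqrt_nonneg (A*B)) hevalz, hsqrtAB]
  have hPQ : ∀ j, P j * B = Q j * A := by
    intro j
    have haP : (0:ℝ) ≤ a j * P j := (mul_pos (hpos j) (hPpos j)).le
    have haQ : (0:ℝ) ≤ a j * Q j := (mul_pos (hpos j) (hQpos j)).le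
    have h0 := (Finset.sum_eq_zero_iff_of_nonneg (fun j _ => sq_nonneg _)).mp hsum0 j (mem_univ j)
    have h1 : Real.sqrt B * Real.sqrt (a j * P j) = Real.sqrt A * Real.sqrt (a j * Q j) := by
      have := pow_eq_zero_iff two_ne_zero |>.mp h0
      linarith
    have h2 : B * (a j * P j) = A * (a j * Q j) := by
      have hsq := congrArg (· ^ 2) h1
      simp only [mul_pow] at hsq
      rwa [Real.sq_sqrt hBpos.le, Real.sq_sqrt hApos.le, Real.sq_sqrt haP, Real.sq_sqrt haQ] at hsq
    apply mul_left_cancel₀ (hpos j).ne'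
    calc a j * (P j * B) = B * (a j * P j) := by ring
      _ = A * (a j * Q j) := h2
      _ = a j * (Q j * A) := by ring
  have hXY : X * B = Y * A := by
    apply mul_left_cancel₀ hbne
    calc b * (X * B) = (b*X)*B := by ring
      _ = -A*B := by rw [hbX]
      _ = (b*Y)*A := by rw [hbY]; ring
      _ = b * (Y*A) := by ring
  have key : ∀ m ∈ g.support, (∏ i, x i ^ m i) * B = (∏ i, y i ^ m i) * A := by
    intro m hm
    rcases hsupp (by exact_mod_cast hm) with ⟨j, rfl⟩ | h
    · exact hPQ j
    · rw [Set.mem_singleton_iff.mp h]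
      exact hXY
  intro m hm m' hm'
  have h1 := key m hm
  have h2 := key m' hm'
  apply mul_right_cancel₀ hBpos.ne'
  calc (∏ i, x i ^ m i) * (∏ i, y i ^ m' i) * B
      = ((∏ i, x i ^ m i) * B) * (∏ i, y i ^ m' i) := by ring
    _ = ((∏ i, y i ^ m i) * A) * (∏ i, y i ^ m' i) := by rw [h1]
    _ = ((∏ i, x i ^ m' i) * B) * (∏ i, y i ^ m i) := by rw [h2]; ring
    _ = (∏ i, x i ^ m' i) * (∏ i, y i ^ m i) * B := by ring

noncomputable def ptc (n : ℕ) : ℝ := ((n:ℝ)+2)/(2*n)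
noncomputable def pt (n : ℕ) (i j : Fin n) (t : ℝ) : Fin n → ℝ :=
  fun k => if k = i then -(t * ptc n) else if k = j then -((1-t) * ptc n) else -(1/(2*(n:ℝ)))

lemma ptc_pos {n : ℕ} (hn : 2 ≤ n) : 0 < ptc n := by
  have : (0:ℝ) < n := by exact_mod_cast Nat.lt_of_lt_of_le (by norm_num) hn
  unfold ptc; positivity

lemma pt_neg {n : ℕ} (hn : 2 ≤ n) (i j : Fin n) (t : ℝ) (ht0 : 0 < t) (ht1 : t < 1) :
    ∀ k, pt n i j t k < 0 := by
  have hc := ptc_pos hn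
  have hnR : (0:ℝ) < n := by exact_mod_cast Nat.lt_of_lt_of_le (by norm_num) hn
  intro k
  unfold pt
  split_ifs
  · nlinarith
  · nlinarith
  · have : (0:ℝ) < 1/(2*(n:ℝ)) := by positivity
    linarith

lemma pt_sum {n : ℕ} (hn : 2 ≤ n) (i j : Fin n) (hij : i ≠ j) (t : ℝ) :
    ∑ k, pt n i j t k = -1 := by
  have hnR : (0:ℝ) < n := by exact_mod_cast Nat.lt_of_lt_of_le (by norm_num) hn
  rw [← Finset.sum_add_sum_compl {i,j}, Finset.sum_pair hij]
  have h1 : pt n i j t i = -(t * ptc n) := by simp [pt]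
  have h2 : pt n i j t j = -((1-t) * ptc n) := by simp [pt, hij.symm]
  have h3 : ∀ k ∈ ({i,j}ᶜ : Finset (Fin n)), pt n i j t k = -(1/(2*(n:ℝ))) := by
    intro k hk
    simp only [Finset.mem_compl, Finset.mem_insert, Finset.mem_singleton, not_or] at hk
    simp [pt, hk.1, hk.2]
  rw [h1, h2, Finset.sum_congr rfl h3, Finset.sum_const, Finset.card_compl,
    Finset.card_pair hij, Fintype.card_fin, nsmul_eq_mul]
  have hcast : ((n - 2 : ℕ) : ℝ) = (n:ℝ) - 2 := by
    push_cast [Nat.cast_sub hn]; ring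
  rw [hcast]
  unfold ptc
  field_simp
  ring

lemma prod_sq_split {n : ℕ} (i j : Fin n) (hij : i ≠ j) (x : Fin n → ℝ) (d : ℝ)
    (hd : ∀ k, k ≠ i → k ≠ j → x k ^ 2 = d) (m : Fin n →₀ ℕ) :
    (∏ k, x k ^ m k)^2
      = (x i ^ 2)^(m i) * (x j ^ 2)^(m j) * d ^ (∑ k ∈ ({i,j}ᶜ : Finset (Fin n)), m k) := by
  have e1 : (∏ k, x k ^ m k)^2 = ∏ k, (x k ^ 2)^(m k) := by
    rw [← Finset.prod_pow]
    exact Finset.prod_congr rfl fun k _ => by rw [← pow_mul, ← pow_mul, mul_comm]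
  rw [e1, ← Finset.prod_mul_prod_compl {i,j}, Finset.prod_pair hij]
  congr 1
  rw [← Finset.prod_pow_eq_pow_sum]
  exact Finset.prod_congr rfl fun k hk => by
    simp only [Finset.mem_compl, Finset.mem_insert, Finset.mem_singleton, not_or] at hk
    rw [hd k hk.1 hk.2]

lemma nat49 (a b c d : ℕ) (h : 4^a * 9^b = 4^c * 9^d) : a = c ∧ b = d := by
  have h' : 2^(2*a) * 3^(2*b) = 2^(2*c) * 3^(2*d) := by
    calc 2^(2*a) * 3^(2*b) = 4^a * 9^b := by rw [pow_mul, pow_mul]; norm_num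
    _ = 4^c * 9^d := h
    _ = 2^(2*c) * 3^(2*d) := by rw [pow_mul, pow_mul]; norm_num
  have h2 := congrArg (fun k => k.factorization 2) h'
  have h3 := congrArg (fun k => k.factorization 3) h'
  simp [Nat.factorization_mul, Nat.Prime.factorization_pow, Nat.prime_two, Nat.prime_three,
    pow_ne_zero, Finsupp.single_apply] at h2 h3
  omega

lemma step_lemma (E D : ℝ) (hE : 0 < E) (hD : 0 < D) (p q p' q' M M' : ℕ)
    (h : ((4*E)^p * (4*E)^q * D^M) * (E^p' * (9*E)^q' * D^M')
        = ((4*E)^p' * (4*E)^q' * D^M') * (E^p * (9*E)^q * D^M)) : p = p' ∧ q = q' := by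
  have h2 : ((4:ℝ)^(p+q) * 9^q') * (E^(p+q+p'+q') * D^(M+M'))
      = ((4:ℝ)^(p'+q') * 9^q) * (E^(p+q+p'+q') * D^(M+M')) := by
    calc ((4:ℝ)^(p+q) * 9^q') * (E^(p+q+p'+q') * D^(M+M'))
        = ((4*E)^p * (4*E)^q * D^M) * (E^p' * (9*E)^q' * D^M') := by
          rw [mul_pow, mul_pow, mul_pow, pow_add, pow_add, pow_add, pow_add, pow_add]; ring
      _ = ((4*E)^p' * (4*E)^q' * D^M') * (E^p * (9*E)^q * D^M) := h
      _ = ((4:ℝ)^(p'+q') * 9^q) * (E^(p+q+p'+q') * D^(M+M')) := by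
          rw [mul_pow, mul_pow, mul_pow, pow_add, pow_add, pow_add, pow_add, pow_add]; ring
  have h3 : (4:ℝ)^(p+q) * 9^q' = 4^(p'+q') * 9^q :=
    mul_right_cancel₀ (by positivity) h2
  have h4 : 4^(p+q) * 9^q' = 4^(p'+q') * 9^q := by exact_mod_cast h3
  have := nat49 _ _ _ _ h4
  omega


lemma no_vanish {n : ℕ} (hn : 2 ≤ n) (g : MvPolynomial (Fin n) ℝ)
    (hg : IsCircuit n g) (hnn : ∀ x : Fin n → ℝ, 0 ≤ eval x g)
    (hz : ∀ i j : Fin n, i ≠ j → ∀ t : ℝ, 0 < t → t < 1 → eval (pt n i j t) g = 0) :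
    False := by
  obtain ⟨r, α, β, lam, hr, hev, haff, hlam, hsuml, hβc, hpos, hsupp⟩ := hg
  have hinj : Function.Injective α := fun u v h => haff.injective (congrArg (expVec n) h)
  obtain ⟨i0, i1, h01⟩ : ∃ i0 i1 : Fin n, i0 ≠ i1 :=
    ⟨⟨0, by omega⟩, ⟨1, by omega⟩, by simp [Fin.ext_iff]⟩
  have hnt : Nontrivial (Fin n) := ⟨⟨i0, i1, h01⟩⟩
  by_cases hcase : β ∈ Set.range α ∨ coeff β g = 0
  · have hneg := pt_neg hn i0 i1 (1/2) (by norm_num) (by norm_num)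
    have h0 := hz i0 i1 h01 (1/2) (by norm_num) (by norm_num)
    have hposval : 0 < eval (pt n i0 i1 (1/2)) g := by
      rw [eval_eq']
      apply Finset.sum_pos
      · intro m hm
        have hm2 : (∀ i, Even (m i)) ∧ 0 < coeff m g := by
          rcases hsupp (Finset.mem_coe.mpr hm) with ⟨jj, rfl⟩ | hmb
          · exact ⟨hev jj, hpos jj⟩
          · rw [Set.mem_singleton_iff] at hmb
            subst hmb
            rcases hcase with ⟨jj, hjj⟩ | hb0
            · rw [← hjj]; exact ⟨hev jj, hpos jj⟩
            · exact absurd hb0 (mem_support_iff.mp hm)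
        exact mul_pos hm2.2 (Finset.prod_pos fun i _ => (hm2.1 i).pow_pos (hneg i).ne)
      · exact ⟨α 0, mem_support_iff.mpr (hpos 0).ne'⟩
    linarith
  · push_neg at hcase
    obtain ⟨hβr, hbne⟩ := hcase
    have hcR : 0 < ptc n := ptc_pos hn
    have hnR : (0:ℝ) < n := by exact_mod_cast Nat.lt_of_lt_of_le (by norm_num) hn
    have key : ∀ m ∈ g.support, ∀ m' ∈ g.support, m = m' := by
      intro m hm m' hm'
      ext i
      obtain ⟨j, hji⟩ := exists_ne i
      have hij : i ≠ j := hji.symm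
      set x := pt n i j (1/2) with hxdef
      set y := pt n i j (1/4) with hydef
      have hxn : ∀ k, x k < 0 := pt_neg hn i j (1/2) (by norm_num) (by norm_num)
      have hyn : ∀ k, y k < 0 := pt_neg hn i j (1/4) (by norm_num) (by norm_num)
      have cross := ratio_core g α β hinj hβr hsupp hev hpos hnn x y hxn hyn
        (by rw [hxdef]; exact hz i j hij (1/2) (by norm_num) (by norm_num))
        (by rw [hydef]; exact hz i j hij (1/4) (by norm_num) (by norm_num))
        m hm m' hm'
      have e2 := congrArg (· ^ 2) cross
      simp only [mul_pow] at e2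
      set E := ptc n ^ 2 / 16 with hE
      set D := (1/(2*(n:ℝ)))^2 with hD
      have hEpos : 0 < E := by rw [hE]; positivity
      have hDpos : 0 < D := by rw [hD]; positivity
      have hdx : ∀ k, k ≠ i → k ≠ j → x k ^ 2 = D := by
        intro k h1 h2; rw [hxdef, hD]; simp [pt, h1, h2]
      have hdy : ∀ k, k ≠ i → k ≠ j → y k ^ 2 = D := by
        intro k h1 h2; rw [hydef, hD]; simp [pt, h1, h2]
      have hxi : x i ^ 2 = 4 * E := by rw [hxdef, hE]; simp [pt]; ring
      have hxj : x j ^ 2 = 4 * E := by rw [hxdef, hE]; simp [pt, hji]; ring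
      have hyi : y i ^ 2 = E := by rw [hydef, hE]; simp [pt]; ring
      have hyj : y j ^ 2 = 9 * E := by rw [hydef, hE]; simp [pt, hji]; ring
      rw [prod_sq_split i j hij x D hdx m, prod_sq_split i j hij x D hdx m',
          prod_sq_split i j hij y D hdy m, prod_sq_split i j hij y D hdy m'] at e2
      rw [hxi, hxj, hyi, hyj] at e2
      exact (step_lemma E D hEpos hDpos (m i) (m j) (m' i) (m' j) _ _ e2).1
    have hβs : β ∈ g.support := mem_support_iff.mpr hbne
    have hαs : α 0 ∈ g.support := mem_support_iff.mpr (hpos 0).ne'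
    exact hβr ⟨0, (key β hβs (α 0) hαs).symm⟩

end SONCAux

/-- For every `n ≥ 2`, the polynomial `q = (1 + x_1 + ⋯ + x_n)^2` is a sum of
squares but is not SONC; in particular `Σ_{n,2} ⊄ C_{n,2}`. -/
theorem stmt1 (n : ℕ) (hn : 2 ≤ n) :
    (∃ (k : ℕ) (g : Fin k → MvPolynomial (Fin n) ℝ),
        ((1 + ∑ i, X i : MvPolynomial (Fin n) ℝ)) ^ 2 = ∑ i, (g i) ^ 2) ∧
    ¬ IsSONC n (((1 + ∑ i, X i : MvPolynomial (Fin n) ℝ)) ^ 2) ∧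
    ¬ (sosCone n 2 ⊆ soncCone n 2) := by
  have evq : ∀ x : Fin n → ℝ,
      eval x (((1 + ∑ i, X i : MvPolynomial (Fin n) ℝ)) ^ 2) = (1 + ∑ i, x i)^2 := by
    intro x
    rw [map_pow, map_add, map_one, map_sum]
    simp [eval_X]
  have hnotsonc : ¬ IsSONC n (((1 + ∑ i, X i : MvPolynomial (Fin n) ℝ)) ^ 2) := by
    rintro ⟨k, μ, gg, hμ, hcirc, hgnn, heq⟩
    have hzero : ∀ (i j : Fin n), i ≠ j → ∀ t : ℝ, 0 < t → t < 1 →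
        ∀ l, μ l * eval (SONCAux.pt n i j t) (gg l) = 0 := by
      intro i j hij t ht0 ht1
      have h0 : eval (SONCAux.pt n i j t) (((1 + ∑ i, X i : MvPolynomial (Fin n) ℝ)) ^ 2) = 0 := by
        rw [evq, SONCAux.pt_sum hn i j hij t]; ring
      rw [heq, map_sum] at h0
      have h0' : ∑ l, μ l * eval (SONCAux.pt n i j t) (gg l) = 0 := by
        rw [← h0]
        exact Finset.sum_congr rfl fun l _ => (smul_eval _ _ _).symm
      have := (Finset.sum_eq_zero_iff_of_nonneg
        (fun l _ => mul_nonneg (hμ l) (hgnn l _))).mp h0'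
      exact fun l => this l (Finset.mem_univ l)
    obtain ⟨l, hl⟩ : ∃ l, μ l ≠ 0 := by
      by_contra h
      push_neg at h
      have h1 := congrArg (eval (fun _ : Fin n => (0:ℝ))) heq
      rw [evq, map_sum] at h1
      simp [h, smul_eval] at h1
    apply SONCAux.no_vanish hn (gg l) (hcirc l) (hgnn l)
    intro i j hij t ht0 ht1
    have h2 := hzero i j hij t ht0 ht1 l
    exact (mul_eq_zero.mp h2).resolve_left hl
  have hsos : ∃ (k : ℕ) (g : Fin k → MvPolynomial (Fin n) ℝ),
      ((1 + ∑ i, X i : MvPolynomial (Fin n) ℝ)) ^ 2 = ∑ i, (g i) ^ 2 :=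
    ⟨1, fun _ => 1 + ∑ i, X i, by rw [Fin.sum_univ_one]⟩
  refine ⟨hsos, hnotsonc, ?_⟩
  intro hsub
  have hdeg : (((1 + ∑ i, X i : MvPolynomial (Fin n) ℝ)) ^ 2).totalDegree ≤ 2 := by
    refine le_trans (totalDegree_pow _ _) ?_
    have h1 : (1 + ∑ i, X i : MvPolynomial (Fin n) ℝ).totalDegree ≤ 1 := by
      refine le_trans (totalDegree_add _ _) ?_
      rw [max_le_iff]
      refine ⟨by simp [totalDegree_one], ?_⟩
      refine le_trans (totalDegree_finset_sum _ _) ?_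
      apply Finset.sup_le
      intro i _
      rw [totalDegree_X]
    calc 2 * (1 + ∑ i, X i : MvPolynomial (Fin n) ℝ).totalDegree ≤ 2 * 1 :=
        Nat.mul_le_mul_left 2 h1
      _ = 2 := rfl
  have hmem : (((1 + ∑ i, X i : MvPolynomial (Fin n) ℝ)) ^ 2) ∈ sosCone n 2 := ⟨hsos, hdeg⟩
  exact hnotsonc (hsub hmem).1
end

section
/- For every n ≥ 1 and all integers d_1,…,d_n ≥ 2, the polynomial (1+x_1)^{2d_1} + (1+x_2)^{2d_2} + ⋯ + (1+x_n)^{2d_n} is a sum of squares of real polynomials but is not a sum of nonnegative circuit polynomials. In particular, with d = max{d_1,…,d_n}, it lies in Σ_{n,2d} ∖ C_{n,2d}, so Σ_{n,2d} ⊄ C_{n,2d} for all n ≥ 1 and 2d ≥ 4. -/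
open MvPolynomial Finset

section AuxLemmas

private lemma nonneg_poly_coeff (q : Polynomial ℝ) (hq : ∀ t : ℝ, 0 ≤ q.eval t)
    (h0 : q.coeff 0 = 0) : q.coeff 1 = 0 ∧ 0 ≤ q.coeff 2 := by
  obtain ⟨r, hr⟩ : (Polynomial.X : Polynomial ℝ) ∣ q := Polynomial.X_dvd_iff.2 h0
  have hrc : ∀ t : ℝ, q.eval t = t * r.eval t := fun t => by rw [hr, Polynomial.eval_mul, Polynomial.eval_X]
  have hge : 0 ≤ r.eval 0 := by
    refine ge_of_tendsto (((r.continuous).tendsto 0).mono_left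
      (nhdsWithin_le_nhds (s := Set.Ioi (0:ℝ)))) ?_
    filter_upwards [self_mem_nhdsWithin] with t ht
    have h1 := hq t
    rw [hrc t] at h1
    exact (mul_nonneg_iff_of_pos_left (show (0:ℝ) < t from ht)).mp h1
  have hle : r.eval 0 ≤ 0 := by
    refine le_of_tendsto (((r.continuous).tendsto 0).mono_left
      (nhdsWithin_le_nhds (s := Set.Iio (0:ℝ)))) ?_
    filter_upwards [self_mem_nhdsWithin] with t ht
    have h1 := hq t
    rw [hrc t] at h1
    have ht' : t < (0:ℝ) := ht
    exact le_of_not_gt fun hgt => absurd h1 (not_le.mpr (mul_neg_of_neg_of_pos ht' hgt))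
  have hc1 : q.coeff 1 = 0 := by
    have h2 : q.coeff 1 = r.coeff 0 := by rw [hr, Polynomial.coeff_X_mul]
    rw [h2, Polynomial.coeff_zero_eq_eval_zero]
    exact le_antisymm hle hge
  refine ⟨hc1, ?_⟩
  obtain ⟨s, hs⟩ : (Polynomial.X : Polynomial ℝ) ^ 2 ∣ q := by
    rw [Polynomial.X_pow_dvd_iff]
    intro d hd
    interval_cases d
    · exact h0
    · exact hc1
  have hsc : ∀ t : ℝ, q.eval t = t ^ 2 * s.eval t := fun t => by
    rw [hs, Polynomial.eval_mul, Polynomial.eval_pow, Polynomial.eval_X]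
  have hc2 : q.coeff 2 = s.coeff 0 := by
    rw [hs]
    exact Polynomial.coeff_X_pow_mul s 2 0
  rw [hc2, Polynomial.coeff_zero_eq_eval_zero]
  refine ge_of_tendsto (((s.continuous).tendsto 0).mono_left
    (nhdsWithin_le_nhds (s := Set.Ioi (0:ℝ)))) ?_
  filter_upwards [self_mem_nhdsWithin] with t ht
  have h1 := hq t
  rw [hsc t] at h1
  have ht' : (0:ℝ) < t := ht
  exact (mul_nonneg_iff_of_pos_left (by positivity)).mp h1

private lemma phi_form {n : ℕ} (i : Fin n) (q : MvPolynomial (Fin n) ℝ) :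
    aeval (fun k => if k = i then (-1 - Polynomial.X : Polynomial ℝ) else -1) q
      = ∑ m ∈ q.support,
          Polynomial.C (q.coeff m * (-1 : ℝ) ^ (∑ k, m k)) * (1 + Polynomial.X) ^ (m i) := by
  rw [aeval_def, eval₂_eq']
  refine Finset.sum_congr rfl fun m _ => ?_
  have hprod : (∏ k, (if k = i then (-1 - Polynomial.X : Polynomial ℝ) else -1) ^ m k)
      = Polynomial.C ((-1 : ℝ) ^ (∑ k, m k)) * (1 + Polynomial.X) ^ (m i) := by
    rw [← Finset.mul_prod_erase Finset.univ _ (Finset.mem_univ i), if_pos rfl,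
      Finset.prod_congr rfl (fun k hk => by rw [if_neg (Finset.ne_of_mem_erase hk)]),
      Finset.prod_pow_eq_pow_sum,
      ← Finset.add_sum_erase Finset.univ (fun k => m k) (Finset.mem_univ i)]
    have h1 : (-1 - Polynomial.X : Polynomial ℝ) = -(1 + Polynomial.X) := by ring
    have h2 : ∀ e : ℕ, ((-1 : Polynomial ℝ)) ^ e = Polynomial.C ((-1 : ℝ) ^ e) := fun e => by
      rw [map_pow, map_neg, map_one]
    rw [h1, neg_pow, h2, h2, pow_add, map_mul]
    ring
  rw [hprod, Polynomial.algebraMap_eq, ← mul_assoc, ← Polynomial.C_mul]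

private lemma phi_coeff {n : ℕ} (i : Fin n) (q : MvPolynomial (Fin n) ℝ) (s : ℕ) :
    (aeval (fun k => if k = i then (-1 - Polynomial.X : Polynomial ℝ) else -1) q).coeff s
      = ∑ m ∈ q.support, q.coeff m * ((-1 : ℝ) ^ (∑ k, m k) * ((m i).choose s : ℝ)) := by
  rw [phi_form, Polynomial.finset_sum_coeff]
  refine Finset.sum_congr rfl fun m _ => ?_
  rw [Polynomial.coeff_C_mul, Polynomial.coeff_one_add_X_pow, mul_assoc]

private lemma phi_eval {n : ℕ} (i : Fin n) (q : MvPolynomial (Fin n) ℝ) (t : ℝ) :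
    Polynomial.eval t (aeval (fun k => if k = i then (-1 - Polynomial.X : Polynomial ℝ) else -1) q)
      = eval (fun k => if k = i then -1 - t else (-1 : ℝ)) q := by
  have h := congrFun (congrArg (DFunLike.coe)
      (MvPolynomial.comp_aeval (Polynomial.aeval t)
        (f := fun k : Fin n => if k = i then (-1 - Polynomial.X : Polynomial ℝ) else -1))) q
  simp only [AlgHom.coe_comp, Function.comp_apply] at h
  have hL : Polynomial.aeval t (aeval
      (fun k : Fin n => if k = i then (-1 - Polynomial.X : Polynomial ℝ) else -1) q)
      = Polynomial.eval t (aeval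
      (fun k : Fin n => if k = i then (-1 - Polynomial.X : Polynomial ℝ) else -1) q) :=
    congrFun (Polynomial.coe_aeval_eq_eval t) _
  rw [hL] at h
  rw [h]
  have hfun : (fun k : Fin n => Polynomial.aeval t
      (if k = i then (-1 - Polynomial.X : Polynomial ℝ) else -1))
      = fun k => if k = i then -1 - t else (-1 : ℝ) := by
    funext k
    split_ifs <;> simp
  rw [hfun]
  rw [show MvPolynomial.aeval (fun k : Fin n => if k = i then -1 - t else (-1:ℝ)) q
      = MvPolynomial.eval (fun k : Fin n => if k = i then -1 - t else (-1:ℝ)) q from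
    DFunLike.congr_fun (MvPolynomial.coe_aeval_eq_eval _) q]

private lemma sum_support_eq {n r : ℕ} (g : MvPolynomial (Fin n) ℝ)
    (α : Fin (r + 1) → (Fin n →₀ ℕ)) (β : Fin n →₀ ℕ)
    (hinj : Function.Injective α) (hβ : β ∉ Set.range α)
    (hsupp : (g.support : Set (Fin n →₀ ℕ)) ⊆ Set.range α ∪ {β})
    (w : (Fin n →₀ ℕ) → ℝ) :
    ∑ m ∈ g.support, g.coeff m * w m
      = (∑ j, g.coeff (α j) * w (α j)) + g.coeff β * w β := by
  have hsub : g.support ⊆ (Finset.image α Finset.univ) ∪ {β} := by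
    intro m hm
    rcases hsupp hm with ⟨j, rfl⟩ | h
    · exact Finset.mem_union_left _ (Finset.mem_image_of_mem _ (Finset.mem_univ j))
    · simp only [Set.mem_singleton_iff] at h
      subst h
      exact Finset.mem_union_right _ (Finset.mem_singleton_self _)
  have hdisj : Disjoint (Finset.image α Finset.univ) ({β} : Finset (Fin n →₀ ℕ)) := by
    rw [Finset.disjoint_singleton_right]
    intro hmem
    obtain ⟨j, -, rfl⟩ := Finset.mem_image.1 hmem
    exact hβ ⟨j, rfl⟩
  rw [Finset.sum_subset hsub (fun m _ hm => by
      rw [MvPolynomial.notMem_support_iff.1 hm, zero_mul]),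
    Finset.sum_union hdisj, Finset.sum_image (fun a _ b _ h => hinj h), Finset.sum_singleton]

private lemma sum_support_eq' {n r : ℕ} (g : MvPolynomial (Fin n) ℝ)
    (α : Fin (r + 1) → (Fin n →₀ ℕ))
    (hinj : Function.Injective α)
    (hsupp : (g.support : Set (Fin n →₀ ℕ)) ⊆ Set.range α)
    (w : (Fin n →₀ ℕ) → ℝ) :
    ∑ m ∈ g.support, g.coeff m * w m = ∑ j, g.coeff (α j) * w (α j) := by
  have hsub : g.support ⊆ Finset.image α Finset.univ := by
    intro m hm
    obtain ⟨j, rfl⟩ := hsupp hm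
    exact Finset.mem_image_of_mem _ (Finset.mem_univ j)
  rw [Finset.sum_subset hsub (fun m _ hm => by
      rw [MvPolynomial.notMem_support_iff.1 hm, zero_mul]),
    Finset.sum_image (fun a _ b _ h => hinj h)]

end AuxLemmas

private lemma not_sonc_main (n : ℕ) (hn : 1 ≤ n) (dd : Fin n → ℕ) (hdd : ∀ i, 2 ≤ dd i) :
    ¬ IsSONC n (∑ i, (1 + X i) ^ (2 * dd i) : MvPolynomial (Fin n) ℝ) := by
  rintro ⟨k, μ, g, hμ, hcirc, hgnn, hp⟩
  set p : MvPolynomial (Fin n) ℝ := ∑ i, (1 + X i) ^ (2 * dd i) with hpdef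
  set v : Fin n → ℝ := fun _ => -1 with hvdef
  -- p vanishes at v
  have hvp : eval v p = 0 := by
    rw [hpdef, map_sum]
    refine Finset.sum_eq_zero fun i _ => ?_
    rw [map_pow, map_add, map_one, eval_X]
    have : (1 : ℝ) + v i = 0 := by simp [hvdef]
    rw [this, zero_pow (by have := hdd i; omega)]
  -- each term of the SONC decomposition vanishes at v
  have hsum0 : ∀ c, μ c * eval v (g c) = 0 := by
    have h1 : ∑ c, μ c * eval v (g c) = 0 := by
      rw [← hvp, hp, map_sum]
      exact Finset.sum_congr rfl fun c _ => (smul_eval _ _ _).symm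
    intro c
    exact (Finset.sum_eq_zero_iff_of_nonneg
      (fun c _ => mul_nonneg (hμ c) (hgnn c v))).1 h1 c (Finset.mem_univ c)
  -- some weight is positive
  obtain ⟨c, hc⟩ : ∃ c, 0 < μ c := by
    by_contra hno
    push_neg at hno
    have hzero : ∀ c, μ c = 0 := fun c => le_antisymm (hno c) (hμ c)
    have hz : p = 0 := by
      rw [hp]
      exact Finset.sum_eq_zero fun c _ => by rw [hzero, zero_smul]
    have h0 := congrArg (eval (fun _ => (0 : ℝ))) hz
    rw [hpdef, map_sum, map_zero] at h0
    have h1 : ∀ i : Fin n, eval (fun _ => (0:ℝ)) ((1 + X i) ^ (2 * dd i)) = 1 := by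
      intro i
      rw [map_pow, map_add, map_one, eval_X]
      norm_num
    rw [Finset.sum_congr rfl fun i _ => h1 i, Finset.sum_const, Finset.card_univ,
      Fintype.card_fin, nsmul_eq_mul, mul_one] at h0
    exact absurd h0 (by positivity)
  have hgc0 : eval v (g c) = 0 := by
    rcases mul_eq_zero.1 (hsum0 c) with h | h
    · exact absurd h (ne_of_gt hc)
    · exact h
  -- the algebra maps φᵢ
  set fs : Fin n → Fin n → Polynomial ℝ :=
    fun i k => if k = i then (-1 - Polynomial.X : Polynomial ℝ) else -1 with hfs
  -- φᵢ p = X ^ (2 * dd i)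
  have hPq : ∀ i : Fin n, aeval (fs i) p = Polynomial.X ^ (2 * dd i) := by
    intro i
    rw [hpdef, map_sum]
    have hterm : ∀ k' : Fin n, aeval (fs i) (((1 + X k' : MvPolynomial (Fin n) ℝ)) ^ (2 * dd k'))
        = if k' = i then Polynomial.X ^ (2 * dd i) else 0 := by
      intro k'
      rw [map_pow, map_add, map_one, aeval_X]
      by_cases hk : k' = i
      · subst hk
        rw [if_pos rfl]
        have hx : fs k' k' = -1 - Polynomial.X := by simp [hfs]
        rw [hx, show (1 + (-1 - Polynomial.X) : Polynomial ℝ) = -Polynomial.X by ring,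
          (even_two_mul (dd k')).neg_pow]
      · rw [if_neg hk]
        have hx : fs i k' = -1 := by simp [hfs, hk]
        rw [hx, show (1 + (-1) : Polynomial ℝ) = 0 by ring,
          zero_pow (by have := hdd k'; omega)]
    rw [Finset.sum_congr rfl fun k' _ => hterm k', Finset.sum_ite_eq' Finset.univ i,
      if_pos (Finset.mem_univ i)]
  -- coefficient of the image of p is a weighted sum over circuits
  have hlin : ∀ (i : Fin n) (s : ℕ),
      (aeval (fs i) p).coeff s = ∑ c', μ c' * (aeval (fs i) (g c')).coeff s := by
    intro i s
    rw [hp, map_sum, Polynomial.finset_sum_coeff]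
    refine Finset.sum_congr rfl fun c' _ => ?_
    rw [map_smul, Polynomial.coeff_smul, smul_eq_mul]
  -- basic facts about qᵢ := φᵢ (g c') for any c' with μ c' ≠ 0
  have hq0 : ∀ (i : Fin n) (c' : Fin k), eval v (g c') = 0 →
      (aeval (fs i) (g c')).coeff 0 = 0 := by
    intro i c' h0
    rw [Polynomial.coeff_zero_eq_eval_zero, phi_eval]
    rw [show (fun k' : Fin n => if k' = i then (-1:ℝ) - 0 else -1) = v from
      funext fun k' => by split_ifs <;> simp [hvdef]]
    exact h0
  have hqnn : ∀ (i : Fin n) (c' : Fin k) (t : ℝ),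
      0 ≤ (aeval (fs i) (g c')).eval t := by
    intro i c' t
    rw [hfs, phi_eval]
    exact hgnn c' _
  -- coefficient 2 of φᵢ p vanishes
  have hP2 : ∀ i : Fin n, (aeval (fs i) p).coeff 2 = 0 := by
    intro i
    rw [hPq i, Polynomial.coeff_X_pow, if_neg (by have := hdd i; omega)]
  -- all three low coefficients of φᵢ (g c) vanish
  have hkey : ∀ i : Fin n, (aeval (fs i) (g c)).coeff 0 = 0 ∧
      (aeval (fs i) (g c)).coeff 1 = 0 ∧ (aeval (fs i) (g c)).coeff 2 = 0 := by
    intro i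
    have h0 := hq0 i c hgc0
    have h12 := nonneg_poly_coeff _ (hqnn i c) h0
    have hterm : ∀ c', 0 ≤ μ c' * (aeval (fs i) (g c')).coeff 2 := by
      intro c'
      rcases eq_or_lt_of_le (hμ c') with h | h
      · rw [← h, zero_mul]
      · have e0 : eval v (g c') = 0 := by
          rcases mul_eq_zero.1 (hsum0 c') with h' | h'
          · exact absurd h' (ne_of_gt h)
          · exact h'
        exact mul_nonneg h.le (nonneg_poly_coeff _ (hqnn i c') (hq0 i c' e0)).2
    have hall : ∀ c', μ c' * (aeval (fs i) (g c')).coeff 2 = 0 := by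
      intro c'
      have hs0 : ∑ c', μ c' * (aeval (fs i) (g c')).coeff 2 = 0 := by
        rw [← hlin, hP2]
      exact (Finset.sum_eq_zero_iff_of_nonneg (fun c' _ => hterm c')).1 hs0 c'
        (Finset.mem_univ c')
    have h2 : (aeval (fs i) (g c)).coeff 2 = 0 := by
      rcases mul_eq_zero.1 (hall c) with h' | h'
      · exact absurd h' (ne_of_gt hc)
      · exact h'
    exact ⟨h0, h12.1, h2⟩
  -- unpack the circuit structure of g c
  obtain ⟨r, α, β, lam, hrn, heven, haff, hlam, hlam1, hβeq, hcpos, hsupp⟩ := hcirc c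
  have hαinj : Function.Injective α := fun a b hab => haff.injective (by rw [hab])
  have hsign : ∀ j, (-1 : ℝ) ^ (∑ k', (α j) k') = 1 := by
    intro j
    rw [← Finset.prod_pow_eq_pow_sum]
    exact Finset.prod_eq_one fun k' _ => (heven j k').neg_one_pow
  -- rewrite the coefficient facts as sums over the support
  have hE : ∀ (i : Fin n) (s : ℕ), (aeval (fs i) (g c)).coeff s
      = ∑ m ∈ (g c).support,
          (g c).coeff m * ((-1 : ℝ) ^ (∑ k', m k') * ((m i).choose s : ℝ)) := by
    intro i s
    rw [hfs]
    exact phi_coeff i (g c) s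
  by_cases hβr : β ∈ Set.range α
  · -- inner point among the vertices: support consists of even points, so eval v (g c) > 0
    have hsupp' : ((g c).support : Set (Fin n →₀ ℕ)) ⊆ Set.range α := by
      intro m hm
      rcases hsupp hm with h | h
      · exact h
      · rw [Set.mem_singleton_iff] at h
        subst h
        exact hβr
    obtain ⟨i⟩ : Nonempty (Fin n) := ⟨⟨0, hn⟩⟩
    have hE0 := (hkey i).1
    rw [hE i 0, sum_support_eq' (g c) α hαinj hsupp'] at hE0
    have : (0:ℝ) < ∑ j, (g c).coeff (α j) * ((-1 : ℝ) ^ (∑ k', (α j) k') * (((α j i).choose 0 : ℕ) : ℝ)) := by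
      refine Finset.sum_pos (fun j _ => ?_) Finset.univ_nonempty
      rw [hsign j, Nat.choose_zero_right]
      norm_num
      exact hcpos j
    rw [hE0] at this
    exact lt_irrefl 0 this
  · -- the genuinely inner point case
    obtain ⟨i0⟩ : Nonempty (Fin n) := ⟨⟨0, hn⟩⟩
    set C : ℝ := ∑ j, (g c).coeff (α j) with hC
    have hCpos : 0 < C := Finset.sum_pos (fun j _ => hcpos j) Finset.univ_nonempty
    set b : ℝ := (g c).coeff β * (-1 : ℝ) ^ (∑ k', β k') with hb
    -- E0 : C + b = 0
    have hE0 : C + b = 0 := by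
      have h := (hkey i0).1
      rw [hE i0 0, sum_support_eq (g c) α β hαinj hβr hsupp] at h
      rw [hC, hb]
      rw [Finset.sum_congr rfl (fun j _ => by
        rw [hsign j, Nat.choose_zero_right, Nat.cast_one, mul_one, mul_one]),
        Nat.choose_zero_right, Nat.cast_one, mul_one] at h
      exact h
    have hcoord : ∀ (i : Fin n) (j : Fin (r + 1)), ((α j) i : ℝ) = ((β i : ℕ) : ℝ) := by
      intro i
      set B : ℝ := ((β i : ℕ) : ℝ) with hB
      -- E1 : A1 + b * B = 0
      have hE1 : (∑ j, (g c).coeff (α j) * ((α j) i : ℝ)) + b * B = 0 := by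
        have h := (hkey i).2.1
        rw [hE i 1, sum_support_eq (g c) α β hαinj hβr hsupp] at h
        rw [Finset.sum_congr rfl (fun j _ => by
          rw [hsign j, Nat.choose_one_right, one_mul])] at h
        rw [hb, hB]
        rw [Nat.choose_one_right] at h
        linarith [h]
      -- E2 : A2 relation
      have hE2 : (∑ j, (g c).coeff (α j) * (((α j) i : ℝ) * (((α j) i : ℝ) - 1) / 2))
          + b * (B * (B - 1) / 2) = 0 := by
        have h := (hkey i).2.2
        rw [hE i 2, sum_support_eq (g c) α β hαinj hβr hsupp] at h
        rw [Finset.sum_congr rfl (fun j _ => by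
          rw [hsign j, Nat.cast_choose_two, one_mul])] at h
        rw [Nat.cast_choose_two] at h
        rw [hb, hB]
        linarith [h]
      -- derive A1 and A2
      set A1 : ℝ := ∑ j, (g c).coeff (α j) * ((α j) i : ℝ) with hA1d
      set A2 : ℝ := ∑ j, (g c).coeff (α j) * ((α j) i : ℝ) ^ 2 with hA2d
      have hbC : b = -C := by linarith [hE0]
      have hA1 : A1 = C * B := by
        rw [hbC] at hE1
        linarith [hE1]
      have hsplit : ∑ j, (g c).coeff (α j) * (((α j) i : ℝ) * (((α j) i : ℝ) - 1) / 2)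
          = A2 / 2 - A1 / 2 := by
        rw [hA1d, hA2d, Finset.sum_div, Finset.sum_div, ← Finset.sum_sub_distrib]
        exact Finset.sum_congr rfl fun j _ => by ring
      rw [hsplit, hbC] at hE2
      have hA2 : A2 = C * B ^ 2 := by nlinarith [hE2, hA1]
      -- variance is zero
      have hvar : ∑ j, (g c).coeff (α j) * (((α j) i : ℝ) - B) ^ 2 = 0 := by
        have hexp : ∑ j, (g c).coeff (α j) * (((α j) i : ℝ) - B) ^ 2
            = A2 - 2 * B * A1 + B ^ 2 * C := by
          rw [hA1d, hA2d, hC, Finset.mul_sum, Finset.mul_sum, ← Finset.sum_sub_distrib,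
            ← Finset.sum_add_distrib]
          exact Finset.sum_congr rfl fun j _ => by ring
        rw [hexp, hA1, hA2]
        ring
      intro j
      have hterm := (Finset.sum_eq_zero_iff_of_nonneg
        (fun j _ => mul_nonneg (hcpos j).le (sq_nonneg _))).1 hvar j (Finset.mem_univ j)
      have h2 : (((α j) i : ℝ) - B) ^ 2 = 0 := by
        rcases mul_eq_zero.1 hterm with h' | h'
        · exact absurd h' (ne_of_gt (hcpos j))
        · exact h'
      have := pow_eq_zero_iff (n := 2) (by norm_num) |>.1 h2
      rw [hB]
      linarith [this]
    -- conclude β = α 0, contradiction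
    have : α 0 = β := by
      ext i
      exact_mod_cast (hcoord i 0)
    exact hβr ⟨0, this⟩


/-- For every `n ≥ 1` and integers `d_1, …, d_n ≥ 2`, the polynomial
`(1+x_1)^{2d_1} + ⋯ + (1+x_n)^{2d_n}` is a sum of squares but not SONC; with
`d = max {d_1, …, d_n}` it lies in `Σ_{n,2d} ∖ C_{n,2d}`, so `Σ_{n,2d} ⊄ C_{n,2d}`. -/
theorem stmt2 (n : ℕ) (hn : 1 ≤ n) (dd : Fin n → ℕ) (hdd : ∀ i, 2 ≤ dd i) :
    (∃ (k : ℕ) (g : Fin k → MvPolynomial (Fin n) ℝ),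
        (∑ i, (1 + X i) ^ (2 * dd i) : MvPolynomial (Fin n) ℝ) = ∑ i, (g i) ^ 2) ∧
    ¬ IsSONC n (∑ i, (1 + X i) ^ (2 * dd i)) ∧
    (∑ i, (1 + X i) ^ (2 * dd i) : MvPolynomial (Fin n) ℝ) ∈
      sosCone n (2 * Finset.univ.sup dd) \ soncCone n (2 * Finset.univ.sup dd) ∧
    ¬ (sosCone n (2 * Finset.univ.sup dd) ⊆ soncCone n (2 * Finset.univ.sup dd)) := by
  have hsq : (∑ i, (1 + X i) ^ (2 * dd i) : MvPolynomial (Fin n) ℝ)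
      = ∑ i, ((1 + X i) ^ (dd i)) ^ 2 := by
    refine Finset.sum_congr rfl fun i _ => ?_
    rw [← pow_mul, mul_comm]
  have hdeg : (∑ i, (1 + X i) ^ (2 * dd i) : MvPolynomial (Fin n) ℝ).totalDegree
      ≤ 2 * Finset.univ.sup dd := by
    refine (totalDegree_finset_sum _ _).trans (Finset.sup_le fun i _ => ?_)
    refine (totalDegree_pow _ _).trans ?_
    have h1 : (1 + X i : MvPolynomial (Fin n) ℝ).totalDegree ≤ 1 := by
      refine (totalDegree_add _ _).trans ?_
      rw [totalDegree_one, totalDegree_X]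
      simp
    calc 2 * dd i * (1 + X i : MvPolynomial (Fin n) ℝ).totalDegree
        ≤ 2 * dd i * 1 := Nat.mul_le_mul_left _ h1
      _ = 2 * dd i := by ring
      _ ≤ 2 * Finset.univ.sup dd := Nat.mul_le_mul_left _ (Finset.le_sup (Finset.mem_univ i))
  have hns := not_sonc_main n hn dd hdd
  have hsos : (∑ i, (1 + X i) ^ (2 * dd i) : MvPolynomial (Fin n) ℝ) ∈
      sosCone n (2 * Finset.univ.sup dd) :=
    ⟨⟨n, fun i => (1 + X i) ^ (dd i), hsq⟩, hdeg⟩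
  exact ⟨⟨n, fun i => (1 + X i) ^ (dd i), hsq⟩, hns,
    ⟨hsos, fun hmem => hns hmem.1⟩,
    fun hsub => hns ((hsub hsos).1)⟩
end

section
/- Let p(x) = a x^m + b x^r + c x^k ∈ ℝ[x] with a > 0, c > 0, b ∈ ℝ, integers k < r < m, and k and m even (so p is a univariate circuit polynomial). Suppose p(x) ≥ 0 for all x ∈ ℝ and p is not the zero polynomial. If v ∈ ℝ with v ≠ 0 satisfies p(v) = 0 and p'(v) = 0, then p''(v) > 0. In particular, a nonzero nonnegative univariate circuit polynomial has at most second-order zeros away from the origin. -/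
open Polynomial

private lemma aux1 (v : ℝ) (n : ℕ) : (n : ℝ) * v ^ (n - 1) * v = (n : ℝ) * v ^ n := by
  rcases n with _ | n
  · simp
  · simp [pow_succ]; ring

private lemma aux2 (v : ℝ) (n : ℕ) :
    (n : ℝ) * (((n - 1 : ℕ) : ℝ) * v ^ (n - 1 - 1)) * v ^ 2 =
      (n : ℝ) * ((n : ℝ) - 1) * v ^ n := by
  rcases n with _ | _ | n
  · simp
  · simp
  · push_cast
    ring

/-- Let `p = a x^m + b x^r + c x^k` with `a > 0`, `c > 0`, `k < r < m`, and
`k`, `m` even (a univariate circuit polynomial), nonnegative on `ℝ` and not the zero polynomial.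
If `v ≠ 0` satisfies `p(v) = 0` and `p'(v) = 0`, then `p''(v) > 0`: a nonzero nonnegative
univariate circuit polynomial has at most second-order zeros away from the origin. -/
theorem stmt3 (a b c : ℝ) (k r m : ℕ) (ha : 0 < a) (hc : 0 < c)
    (hkr : k < r) (hrm : r < m) (hk : Even k) (hm : Even m)
    (hne : (C a * X ^ m + C b * X ^ r + C c * X ^ k : Polynomial ℝ) ≠ 0)
    (hnn : ∀ x : ℝ, 0 ≤ (C a * X ^ m + C b * X ^ r + C c * X ^ k).eval x)
    (v : ℝ) (hv : v ≠ 0)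
    (h0 : (C a * X ^ m + C b * X ^ r + C c * X ^ k).eval v = 0)
    (h1 : (derivative (C a * X ^ m + C b * X ^ r + C c * X ^ k)).eval v = 0) :
    0 < (derivative (derivative (C a * X ^ m + C b * X ^ r + C c * X ^ k))).eval v := by
  simp only [eval_add, eval_mul, eval_C, eval_pow, eval_X] at h0
  simp only [derivative_add, derivative_C_mul, derivative_X_pow, eval_add, eval_mul, eval_C,
    eval_pow, eval_X, eval_natCast] at h1 ⊢
  -- set up the key real quantities
  set A := a * v ^ m with hA
  set B := b * v ^ r with hB
  set Cc := c * v ^ k with hC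
  have hApos : 0 < A := mul_pos ha (hm.pow_pos hv)
  have hCpos : 0 < Cc := mul_pos hc (hk.pow_pos hv)
  have e0 : A + B + Cc = 0 := h0
  have e1 : (m : ℝ) * A + (r : ℝ) * B + (k : ℝ) * Cc = 0 := by
    have := congrArg (· * v) h1
    simp only [add_mul, zero_mul] at this
    calc (m : ℝ) * A + (r : ℝ) * B + (k : ℝ) * Cc
        = a * ((m : ℝ) * v ^ (m-1) * v) + b * ((r : ℝ) * v ^ (r-1) * v)
          + c * ((k : ℝ) * v ^ (k-1) * v) := by
          rw [aux1, aux1, aux1, hA, hB, hC]; ring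
      _ = 0 := by linarith [this]
  have hKR : (k : ℝ) < (r : ℝ) := by exact_mod_cast hkr
  have hRM : (r : ℝ) < (m : ℝ) := by exact_mod_cast hrm
  have key : ((m : ℝ) * ((m : ℝ) - 1)) * A + ((r : ℝ) * ((r : ℝ) - 1)) * B
      + ((k : ℝ) * ((k : ℝ) - 1)) * Cc = ((r : ℝ) - k) * ((m : ℝ) - k) * Cc := by
    linear_combination (-(↑r * ↑m)) * e0 + ((m : ℝ) + r - 1) * e1
  have hkeypos : (0:ℝ) < ((r : ℝ) - k) * ((m : ℝ) - k) * Cc := by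
    have h1' : (0:ℝ) < (r : ℝ) - k := by linarith
    have h2' : (0:ℝ) < (m : ℝ) - k := by linarith
    positivity
  have hv2 : (0:ℝ) < v ^ 2 := by positivity
  have hgoal : (a * ((m : ℝ) * (((m - 1 : ℕ) : ℝ) * v ^ (m - 1 - 1))) +
      b * ((r : ℝ) * (((r - 1 : ℕ) : ℝ) * v ^ (r - 1 - 1))) +
      c * ((k : ℝ) * (((k - 1 : ℕ) : ℝ) * v ^ (k - 1 - 1)))) * v ^ 2
      = ((m : ℝ) * ((m : ℝ) - 1)) * A + ((r : ℝ) * ((r : ℝ) - 1)) * B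
        + ((k : ℝ) * ((k : ℝ) - 1)) * Cc := by
    rw [hA, hB, hC]
    linear_combination a * aux2 v m + b * aux2 v r + c * aux2 v k
  by_contra hcon
  push_neg at hcon
  nlinarith [hgoal, key, hkeypos, hv2]
end

section
/- The polynomial (1+x)^2 is a nonnegative circuit polynomial (hence SONC), but for every integer d ≥ 2 the polynomial (1+x)^{2d} is not a sum of nonnegative circuit polynomials. In particular, (1+x)^4 = ((1+x)^2)^2 is not SONC, so the square of a SONC polynomial need not be a SONC polynomial. -/
open MvPolynomial Finset

noncomputable section SONCAux

/-- the substitution `x ↦ -(1+t)` -/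
def Yf : Fin 1 → Polynomial ℝ := fun _ => -(1 + Polynomial.X)

/-- second derivative at `0` of the substituted polynomial -/
def PhiP (g : MvPolynomial (Fin 1) ℝ) : ℝ :=
  (Polynomial.derivative (Polynomial.derivative (MvPolynomial.aeval Yf g))).eval 0

lemma Y_eval0 (e : ℕ) : ((-(1+Polynomial.X) : Polynomial ℝ)^e).eval 0 = (-1)^e := by simp

lemma Y_d1 (e : ℕ) :
    (Polynomial.derivative ((-(1+Polynomial.X) : Polynomial ℝ)^e)).eval 0 = e * (-1)^e := by
  rcases e with _|e
  · simp
  · simp [Polynomial.derivative_pow]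
    rw [pow_succ]; ring

lemma Y_d2 (e : ℕ) :
    (Polynomial.derivative (Polynomial.derivative ((-(1+Polynomial.X) : Polynomial ℝ)^e))).eval 0
      = e * ((e:ℝ)-1) * (-1)^e := by
  rcases e with _|_|e
  · simp
  · simp
  · simp [Polynomial.derivative_pow]
    rw [pow_succ, pow_succ]; ring

lemma aeval_mono (m : Fin 1 →₀ ℕ) (c : ℝ) :
    MvPolynomial.aeval Yf (monomial m c) = Polynomial.C c * (-(1+Polynomial.X))^(m 0) := by
  rw [aeval_monomial, Finsupp.prod_fintype _ _ (fun i => pow_zero _), Fin.prod_univ_one]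
  rfl

lemma evalComp (g : MvPolynomial (Fin 1) ℝ) (t : ℝ) :
    (MvPolynomial.aeval Yf g).eval t = eval (fun _ : Fin 1 => -(1+t)) g := by
  have h := MvPolynomial.comp_aeval_apply (f := Yf) (Polynomial.aeval t) g
  rw [Polynomial.coe_aeval_eq_eval] at h
  rw [h]
  have : (fun i => Polynomial.eval t (Yf i)) = (fun _ : Fin 1 => -(1+t)) := by
    funext i; simp [Yf]
  rw [← MvPolynomial.coe_aeval_eq_eval, this]
  rfl

lemma keyLemma (g : MvPolynomial (Fin 1) ℝ) (hc : IsCircuit 1 g)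
    (hnn : ∀ x : Fin 1 → ℝ, 0 ≤ eval x g)
    (hz : eval (fun _ : Fin 1 => (-1:ℝ)) g = 0) : 0 < PhiP g := by
  obtain ⟨r, α, β, lam, hr, heven, haff, hlampos, hlamsum, hβ, hcoeff, hsupp⟩ := hc
  interval_cases r
  · -- r = 0 : contradiction with hz
    exfalso
    have hβα : β = α 0 := by
      apply Finsupp.ext; intro i
      have h1 := hβ i
      rw [Fin.sum_univ_one] at h1
      rw [Fin.sum_univ_one] at hlamsum
      rw [hlamsum, one_mul] at h1
      exact_mod_cast h1
    have hsub : g.support ⊆ {α 0} := by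
      intro m hm
      have := hsupp (Finset.mem_coe.mpr hm)
      rcases this with h | h
      · obtain ⟨j, rfl⟩ := h
        simp [Fin.fin_one_eq_zero j]
      · simp [Set.mem_singleton_iff.mp h, hβα]
    have : eval (fun _ : Fin 1 => (-1:ℝ)) g = g.coeff (α 0) := by
      rw [eval_eq']
      rw [Finset.sum_subset hsub (by intro m _ hm; rw [notMem_support_iff.mp hm, zero_mul])]
      rw [Finset.sum_singleton, Fin.prod_univ_one]
      rw [Even.neg_one_pow (heven 0 0), mul_one]
    rw [this] at hz
    exact (hcoeff 0).ne' hz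
  · -- r = 1
    set A := (α 0) 0 with hA
    set B := (α 1) 0 with hB
    set M := β 0 with hM
    set a := g.coeff (α 0) with ha
    set b := g.coeff (α 1) with hb
    set c := g.coeff β with hc
    have hMreal : (M:ℝ) = lam 0 * A + lam 1 * B := by
      have := hβ 0; rwa [Fin.sum_univ_two] at this
    have hlamsum2 : lam 0 + lam 1 = 1 := by rwa [Fin.sum_univ_two] at hlamsum
    have hABne : (A:ℝ) ≠ (B:ℝ) := by
      intro hAB
      have h01 : expVec 1 (α 0) ≠ expVec 1 (α 1) := by
        intro h
        exact (by norm_num : (0:Fin 2) ≠ 1) (haff.injective h)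
      apply h01
      funext i
      have : i = 0 := Subsingleton.elim _ _
      subst this
      exact hAB
    have hMA : (M:ℝ) ≠ (A:ℝ) := by
      intro h
      rw [hMreal] at h
      apply hABne
      have h1 : lam 1 * (A:ℝ) = lam 1 * B := by nlinarith [hlampos 0, hlampos 1]
      exact mul_left_cancel₀ (hlampos 1).ne' h1
    have hMB : (M:ℝ) ≠ (B:ℝ) := by
      intro h
      rw [hMreal] at h
      apply hABne
      have h1 : lam 0 * (A:ℝ) = lam 0 * B := by nlinarith [hlampos 0, hlampos 1]
      exact mul_left_cancel₀ (hlampos 0).ne' h1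
    -- distinctness of exponents
    have hab' : α 0 ≠ α 1 := fun h => hABne (by rw [hA, hB, h])
    have hβa : β ≠ α 0 := fun h => hMA (by rw [hM, hA, h])
    have hβb : β ≠ α 1 := fun h => hMB (by rw [hM, hB, h])
    -- support
    have hsub : g.support ⊆ {α 0, α 1, β} := by
      intro m hm
      have := hsupp (Finset.mem_coe.mpr hm)
      simp only [Finset.mem_insert, Finset.mem_singleton]
      rcases this with h | h
      · obtain ⟨j, rfl⟩ := h
        fin_cases j
        · exact Or.inl rfl
        · exact Or.inr (Or.inl rfl)
      · exact Or.inr (Or.inr (Set.mem_singleton_iff.mp h))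
    have hgsum : g = monomial (α 0) a + monomial (α 1) b + monomial β c := by
      conv_lhs => rw [← MvPolynomial.support_sum_monomial_coeff g]
      rw [Finset.sum_subset hsub (by intro m _ hm; rw [notMem_support_iff.mp hm, map_zero])]
      rw [Finset.sum_insert (by simp [hab', hβa.symm]), Finset.sum_insert (by simp [hβb.symm]),
        Finset.sum_singleton]
      ring
    -- image under aeval
    have hG : MvPolynomial.aeval Yf g
        = Polynomial.C a * (-(1+Polynomial.X))^A + Polynomial.C b * (-(1+Polynomial.X))^B
          + Polynomial.C c * (-(1+Polynomial.X))^M := by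
      rw [hgsum]; rw [map_add, map_add, aeval_mono, aeval_mono, aeval_mono]
    have hevenA : ((-1:ℝ))^A = 1 := Even.neg_one_pow (heven 0 0)
    have hevenB : ((-1:ℝ))^B = 1 := Even.neg_one_pow (heven 1 0)
    -- E0
    have hE0 : a + b + c * (-1)^M = 0 := by
      have h0 : (MvPolynomial.aeval Yf g).eval 0 = 0 := by
        rw [evalComp]
        rw [show (fun _ : Fin 1 => -(1+(0:ℝ))) = (fun _ : Fin 1 => (-1:ℝ)) by funext; norm_num]
        exact hz
      rw [hG] at h0
      simp only [Polynomial.eval_add, Polynomial.eval_mul, Polynomial.eval_C, Y_eval0] at h0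
      rw [hevenA, hevenB] at h0
      linarith [h0]
    -- E1 : first derivative zero at local min
    have hE1 : a * A + b * B + c * ((-1)^M * M) = 0 := by
      have hmin : IsLocalMin (fun t => (MvPolynomial.aeval Yf g).eval t) 0 := by
        have h1 : (MvPolynomial.aeval Yf g).eval 0 = 0 := by
          rw [evalComp]
          rw [show (fun _ : Fin 1 => -(1+(0:ℝ))) = (fun _ : Fin 1 => (-1:ℝ)) by funext; norm_num]
          exact hz
        refine Filter.Eventually.of_forall (fun t => ?_)
        show (MvPolynomial.aeval Yf g).eval 0 ≤ (MvPolynomial.aeval Yf g).eval t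
        rw [h1, evalComp]
        exact hnn _
      have hd0 : (Polynomial.derivative (MvPolynomial.aeval Yf g)).eval 0 = 0 := by
        rw [← Polynomial.deriv]
        exact hmin.deriv_eq_zero
      rw [hG] at hd0
      simp only [Polynomial.derivative_add, Polynomial.derivative_C_mul, Polynomial.eval_add,
        Polynomial.eval_mul, Polynomial.eval_C, Y_d1] at hd0
      rw [hevenA, hevenB] at hd0
      linarith [hd0]
    -- value of PhiP
    have hPhi : PhiP g = a * (A * ((A:ℝ)-1)) + b * (B * ((B:ℝ)-1))
        + c * ((-1)^M * (M * ((M:ℝ)-1))) := by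
      rw [PhiP, hG]
      simp only [Polynomial.derivative_add, Polynomial.derivative_C_mul, Polynomial.eval_add,
        Polynomial.eval_mul, Polynomial.eval_C, Y_d2]
      rw [hevenA, hevenB]
      ring
    rw [hPhi]
    have hc' : c * (-1:ℝ)^M = -(a+b) := by linarith [hE0]
    have hM' : a * A + b * B = (a+b) * M := by
      have : c * ((-1:ℝ)^M * M) = -(a+b) * M := by rw [← mul_assoc, hc']
      linarith [hE1, this]
    have hapos : 0 < a := hcoeff 0
    have hbpos : 0 < b := hcoeff 1
    have habpos : 0 < a + b := by linarith
    have hABsq : 0 < ((A:ℝ) - B)^2 := by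
      have hne : (A:ℝ) - B ≠ 0 := sub_ne_zero.mpr hABne
      positivity
    have key : (a+b) * (a * (↑A * ((A:ℝ) - 1)) + b * (↑B * ((B:ℝ) - 1))
        + c * ((-1)^M * (↑M * ((M:ℝ) - 1)))) = a * b * ((A:ℝ) - B)^2 := by
      linear_combination ((M:ℝ)^2 - (M:ℝ)) * (a+b) * hc'
        + (a*(A:ℝ) + b*(B:ℝ) + (a+b)*(M:ℝ) - (a+b)) * hM'
    nlinarith [key, habpos, mul_pos (mul_pos hapos hbpos) hABsq]

theorem notSONC (d : ℕ) (hd : 2 ≤ d) :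
    ¬ IsSONC 1 ((1 + X 0 : MvPolynomial (Fin 1) ℝ) ^ (2*d)) := by
  rintro ⟨k, μ, g, hμ, hcirc, hnn, hp⟩
  have hpneg : eval (fun _ : Fin 1 => (-1:ℝ)) ((1 + X 0 : MvPolynomial (Fin 1) ℝ) ^ (2*d)) = 0 := by
    rw [map_pow, map_add, map_one, eval_X]
    norm_num
    omega
  have hsum1 : ∑ i, μ i * eval (fun _ : Fin 1 => (-1:ℝ)) (g i) = 0 := by
    rw [← hpneg, hp, map_sum]
    exact Finset.sum_congr rfl fun i _ => (smul_eval _ _ _).symm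
  have hterm1 := (Finset.sum_eq_zero_iff_of_nonneg
    (fun i _ => mul_nonneg (hμ i) (hnn i _))).mp hsum1
  have hPhip : PhiP ((1 + X 0 : MvPolynomial (Fin 1) ℝ) ^ (2*d)) = 0 := by
    obtain ⟨e, he⟩ : ∃ e, 2*d = e + 3 := ⟨2*d - 3, by omega⟩
    rw [PhiP, map_pow]
    have hax : (MvPolynomial.aeval Yf (1 + X 0 : MvPolynomial (Fin 1) ℝ)) = -Polynomial.X := by
      simp [Yf]
    rw [hax, Even.neg_pow ⟨d, by ring⟩, he]
    simp [Polynomial.derivative_X_pow]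
  have hPhisum : ∑ i, μ i * PhiP (g i) = 0 := by
    rw [← hPhip, hp]
    simp only [PhiP, map_sum, map_smul, Polynomial.eval_finset_sum, Polynomial.eval_smul,
      smul_eq_mul]
  have hzero : ∀ i, μ i = 0 := by
    intro i
    by_contra hne
    have hμpos : 0 < μ i := (hμ i).lt_of_ne (Ne.symm hne)
    have hgz : eval (fun _ : Fin 1 => (-1:ℝ)) (g i) = 0 := by
      have := hterm1 i (Finset.mem_univ i)
      rcases mul_eq_zero.mp this with h | h
      · exact absurd h hne
      · exact h
    have hphi : 0 < PhiP (g i) := keyLemma (g i) (hcirc i) (hnn i) hgz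
    have hnonneg : ∀ j ∈ Finset.univ, (0:ℝ) ≤ μ j * PhiP (g j) := by
      intro j _
      rcases eq_or_ne (μ j) 0 with h | h
      · simp [h]
      · have hgz' : eval (fun _ : Fin 1 => (-1:ℝ)) (g j) = 0 := by
          have := hterm1 j (Finset.mem_univ j)
          rcases mul_eq_zero.mp this with h' | h'
          · exact absurd h' h
          · exact h'
        exact le_of_lt (mul_pos ((hμ j).lt_of_ne (Ne.symm h))
          (keyLemma (g j) (hcirc j) (hnn j) hgz'))
    have := (Finset.sum_eq_zero_iff_of_nonneg hnonneg).mp hPhisum i (Finset.mem_univ i)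
    exact (mul_pos hμpos hphi).ne' this
  have hp0 : ((1 + X 0 : MvPolynomial (Fin 1) ℝ) ^ (2*d)) = 0 := by
    rw [hp]
    exact Finset.sum_eq_zero fun i _ => by rw [hzero i, zero_smul]
  have h1 : eval (fun _ : Fin 1 => (0:ℝ)) ((1 + X 0 : MvPolynomial (Fin 1) ℝ) ^ (2*d)) = 1 := by
    rw [map_pow, map_add, map_one, eval_X]
    norm_num
  rw [hp0] at h1
  simp at h1

theorem sqCircuit : IsCircuit 1 (((1 + X 0 : MvPolynomial (Fin 1) ℝ)) ^ 2) := by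
  refine ⟨1, ![0, Finsupp.single 0 2], Finsupp.single 0 1, fun _ => 1/2, le_refl 1,
    ?_, ?_, ?_, ?_, ?_, ?_, ?_⟩
  · intro j i
    fin_cases j <;> fin_cases i <;> simp
  · have h : (fun j => expVec 1 ((![0, Finsupp.single 0 2] : Fin 2 → (Fin 1 →₀ ℕ)) j))
        = ![expVec 1 0, expVec 1 (Finsupp.single 0 2)] := by
      funext j; fin_cases j <;> rfl
    rw [h]
    apply affineIndependent_of_ne
    intro hcon
    have := congrFun hcon 0
    simp [expVec] at this
  · intro j; norm_num
  · simp
  · intro i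
    fin_cases i
    simp [Fin.sum_univ_two, expVec]
  · intro j
    have hf : ((1 + X 0 : MvPolynomial (Fin 1) ℝ)^2) = 1 + C 2 * X 0 + X 0 ^ 2 := by
      rw [map_ofNat]; ring
    fin_cases j
    · rw [hf]
      simp [coeff_X', coeff_mul_X', Finsupp.single_eq_zero, X_pow_eq_monomial, coeff_monomial]
    · rw [hf]
      simp only [Matrix.cons_val_one, Matrix.head_cons, coeff_add, coeff_X_pow]
      have h2 : (Finsupp.single 0 2 - Finsupp.single 0 1 : Fin 1 →₀ ℕ) = Finsupp.single 0 1 := by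
        ext; simp [Finsupp.single_apply]
      simp [coeff_one, coeff_mul_X', Finsupp.single_eq_zero, Finsupp.ext_iff,
        Fin.forall_fin_one, h2, coeff_C]
  · have hf : ((1 + X 0 : MvPolynomial (Fin 1) ℝ)^2)
        = monomial 0 1 + monomial (Finsupp.single 0 1) 2 + monomial (Finsupp.single 0 2) 1 := by
      rw [monomial_zero', ← C_mul_X_pow_eq_monomial, ← C_mul_X_pow_eq_monomial]
      simp only [map_one, map_ofNat, pow_one]
      ring
    rw [hf]
    intro m hm
    have h2 : m = 0 ∨ m = Finsupp.single 0 1 ∨ m = Finsupp.single 0 2 := by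
      by_contra hcon
      push_neg at hcon
      obtain ⟨h0, hai, hbi⟩ := hcon
      have hz : MvPolynomial.coeff m ((monomial 0 1 : MvPolynomial (Fin 1) ℝ)
          + monomial (Finsupp.single 0 1) 2 + monomial (Finsupp.single 0 2) 1) = 0 := by
        rw [coeff_add, coeff_add, coeff_monomial, coeff_monomial, coeff_monomial,
          if_neg (fun h => h0 h.symm), if_neg (fun h => hai h.symm), if_neg (fun h => hbi h.symm)]
        ring
      exact (MvPolynomial.mem_support_iff.mp (Finset.mem_coe.mp hm)) hz
    rcases h2 with rfl | rfl | rfl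
    · exact Or.inl ⟨0, by simp⟩
    · exact Or.inr rfl
    · exact Or.inl ⟨1, by simp⟩

theorem sqNonneg : ∀ x : Fin 1 → ℝ, 0 ≤ eval x (((1 + X 0 : MvPolynomial (Fin 1) ℝ)) ^ 2) := by
  intro x
  rw [map_pow]
  exact sq_nonneg _

end SONCAux

/-- `(1+x)^2` is a nonnegative circuit polynomial (hence SONC), but for every
`d ≥ 2` the polynomial `(1+x)^{2d}` is not SONC; in particular `(1+x)^4 = ((1+x)^2)^2` is not
SONC, so the square of a SONC polynomial need not be SONC. -/
theorem stmt4 :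
    (IsCircuit 1 (((1 + X 0 : MvPolynomial (Fin 1) ℝ)) ^ 2) ∧
      (∀ x : Fin 1 → ℝ, 0 ≤ eval x (((1 + X 0 : MvPolynomial (Fin 1) ℝ)) ^ 2)) ∧
      IsSONC 1 (((1 + X 0 : MvPolynomial (Fin 1) ℝ)) ^ 2)) ∧
    (∀ d : ℕ, 2 ≤ d → ¬ IsSONC 1 (((1 + X 0 : MvPolynomial (Fin 1) ℝ)) ^ (2 * d))) ∧
    ¬ IsSONC 1 ((((1 + X 0 : MvPolynomial (Fin 1) ℝ)) ^ 2) ^ 2) := by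
  refine ⟨⟨sqCircuit, sqNonneg, ?_⟩, fun d hd => notSONC d hd, ?_⟩
  · refine ⟨1, fun _ => 1, fun _ => ((1 + X 0 : MvPolynomial (Fin 1) ℝ)) ^ 2,
      fun _ => zero_le_one, fun _ => sqCircuit, fun _ => sqNonneg, ?_⟩
    rw [Fin.sum_univ_one, one_smul]
  · have h := notSONC 2 le_rfl
    rwa [pow_mul] at h
end

section
/- The bivariate polynomial s(x_1,x_2) = (x_1 + x_2 + x_1 x_2)^2 = x_1^2 x_2^2 + x_1^2 + x_2^2 + 2 x_1 x_2 + 2 x_1^2 x_2 + 2 x_1 x_2^2 is a sum of squares but is not a sum of nonnegative circuit polynomials. More generally, for n ≥ 2 and integers d_3,…,d_n ≥ 2, the polynomial ŝ(x) = (x_1 + x_2 + x_1 x_2)^2 + ∑_{i=3}^n x_i^{2d_i} is a sum of squares but not SONC; with d = max{2, d_3,…,d_n} it lies in Σ_{n,2d} ∖ C_{n,2d}. -/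
open MvPolynomial Finset

private lemma aux_q_monic (d e : ℕ) :
    ((Polynomial.X - 1 : Polynomial ℝ) ^ d * Polynomial.X ^ e).Monic := by
  simpa using ((Polynomial.monic_X_sub_C (1 : ℝ)).pow d).mul (Polynomial.monic_X_pow e)

private lemma aux_q_natDegree (d e : ℕ) :
    ((Polynomial.X - 1 : Polynomial ℝ) ^ d * Polynomial.X ^ e).natDegree = d + e := by
  rw [Polynomial.Monic.natDegree_mul (by simpa using (Polynomial.monic_X_sub_C (1:ℝ)).pow d)
      (Polynomial.monic_X_pow e), Polynomial.natDegree_pow, Polynomial.natDegree_X_pow]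
  have : (Polynomial.X - 1 : Polynomial ℝ).natDegree = 1 := by
    rw [← Polynomial.C_1, Polynomial.natDegree_X_sub_C]
  rw [this, mul_one]

private lemma aux_q_coeff_zero (d e : ℕ) :
    ((Polynomial.X - 1 : Polynomial ℝ) ^ d * Polynomial.X ^ e).coeff 0
      = (-1 : ℝ) ^ d * (0 : ℝ) ^ e := by
  rw [Polynomial.coeff_zero_eq_eval_zero]
  simp

private lemma aux_convex {k : ℕ} (lam : Fin k → ℝ) (a : Fin k → ℕ) (c : ℕ)
    (hl : ∀ j, 0 < lam j) (hs : ∑ j, lam j = 1)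
    (heq : (c : ℝ) = ∑ j, lam j * (a j : ℝ)) (hle : ∀ j, a j ≤ c) (j : Fin k) : a j = c := by
  have h0 : ∑ j, lam j * ((c : ℝ) - a j) = 0 := by
    have : ∑ j, lam j * ((c : ℝ) - a j) = (∑ j, lam j) * c - ∑ j, lam j * (a j : ℝ) := by
      rw [Finset.sum_mul, ← Finset.sum_sub_distrib]
      exact Finset.sum_congr rfl fun j _ => by ring
    rw [this, hs, ← heq]; ring
  have hterm : ∀ j ∈ Finset.univ, (0:ℝ) ≤ lam j * ((c : ℝ) - a j) := by
    intro j _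
    have : (a j : ℝ) ≤ (c : ℝ) := by exact_mod_cast hle j
    exact mul_nonneg (hl j).le (by linarith)
  have := (Finset.sum_eq_zero_iff_of_nonneg hterm).1 h0 j (Finset.mem_univ j)
  have h2 : (c : ℝ) - a j = 0 := by
    rcases mul_eq_zero.1 this with h | h
    · exact absurd h (hl j).ne'
    · exact h
  have : (a j : ℝ) = (c : ℝ) := by linarith
  exact_mod_cast this

private noncomputable def cpt (n : ℕ) (t : ℝ) : Fin n → ℝ := fun i =>
  if (i : ℕ) = 0 then t - 1 else if (i : ℕ) = 1 then t⁻¹ - 1 else 0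

private def ypt (n : ℕ) : Fin n → ℝ := fun i => if (i : ℕ) ≤ 1 then 1 else 0

private lemma circuit_vanish {n : ℕ} (hn : 2 ≤ n) (g : MvPolynomial (Fin n) ℝ)
    (hg : IsCircuit n g)
    (hv : ∀ t : ℝ, 0 < t → eval (cpt n t) g = 0)
    (m : Fin n →₀ ℕ) (hm : m ∈ g.support) : ∃ i : Fin n, 2 ≤ (i : ℕ) ∧ m i ≠ 0 := by
  classical
  obtain ⟨r, α, β, lam, _, heven, _, hlam, hlam1, hbary, hpos, hsupp⟩ := hg
  by_contra hP0
  push_neg at hP0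
  set i0 : Fin n := ⟨0, by omega⟩ with hi0
  set i1 : Fin n := ⟨1, by omega⟩ with hi1
  set P : (Fin n →₀ ℕ) → Prop := fun m' => ∀ i : Fin n, 2 ≤ (i : ℕ) → m' i = 0 with hP
  set S : Finset (Fin n →₀ ℕ) := g.support.filter P with hS
  have hSsupp : ∀ m' ∈ S, m' ∈ g.support := fun m' h => (Finset.mem_filter.1 h).1
  have hSP : ∀ m' ∈ S, P m' := fun m' h => (Finset.mem_filter.1 h).2
  have hSne : S.Nonempty := ⟨m, Finset.mem_filter.2 ⟨hm, hP0⟩⟩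
  -- membership in the circuit
  have hrange : ∀ m' ∈ S, m' ≠ β → ∃ j, α j = m' := by
    intro m' hm' hne
    rcases hsupp (hSsupp m' hm') with h | h
    · exact h
    · exact absurd h hne
  have hSpos : ∀ m' ∈ S, m' ≠ β → 0 < g.coeff m' ∧ ∀ i, Even (m' i) := by
    intro m' hm' hne
    obtain ⟨j, hj⟩ := hrange m' hm' hne
    exact ⟨hj ▸ hpos j, hj ▸ heven j⟩
  -- the evaluation formula on the curve
  have hprod : ∀ (t : ℝ) (m' : Fin n →₀ ℕ),
      (∏ i, cpt n t i ^ m' i) =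
        if P m' then (t - 1) ^ m' i0 * (t⁻¹ - 1) ^ m' i1 else 0 := by
    intro t m'
    by_cases h : P m'
    · rw [if_pos h]
      have hsub : ({i0, i1} : Finset (Fin n)) ⊆ Finset.univ := Finset.subset_univ _
      have h01 : i0 ≠ i1 := by simp [hi0, hi1, Fin.ext_iff]
      rw [← Finset.prod_subset hsub]
      · rw [Finset.prod_pair h01]
        have e0 : cpt n t i0 = t - 1 := by simp [cpt, hi0]
        have e1 : cpt n t i1 = t⁻¹ - 1 := by simp [cpt, hi1]
        rw [e0, e1]
      · intro i _ hi
        have h2 : 2 ≤ (i : ℕ) := by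
          simp only [Finset.mem_insert, Finset.mem_singleton] at hi
          push_neg at hi
          have := hi.1; have := hi.2
          have : (i : ℕ) ≠ 0 := fun hc => hi.1 (Fin.ext (by simp [hi0, hc]))
          have : (i : ℕ) ≠ 1 := fun hc => hi.2 (Fin.ext (by simp [hi1, hc]))
          omega
        rw [h i h2, pow_zero]
    · rw [if_neg h]
      replace h : ¬ ∀ i : Fin n, 2 ≤ (i : ℕ) → m' i = 0 := h
      push_neg at h
      obtain ⟨i, hi2, hmi⟩ := h
      refine Finset.prod_eq_zero (Finset.mem_univ i) ?_
      have : cpt n t i = 0 := by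
        unfold cpt
        rw [if_neg (by omega), if_neg (by omega)]
      rw [this, zero_pow hmi]
  have heval : ∀ t : ℝ, eval (cpt n t) g =
      ∑ m' ∈ S, g.coeff m' * ((t - 1) ^ m' i0 * (t⁻¹ - 1) ^ m' i1) := by
    intro t
    rw [eval_eq' (cpt n t) g, hS, Finset.sum_filter]
    refine Finset.sum_congr rfl fun m' _ => ?_
    rw [hprod t m', mul_ite, mul_zero]
  -- the single-variable polynomial
  set B : ℕ := S.sup fun m' => m' i1 with hB
  set A : ℕ := S.sup fun m' => m' i0 with hA
  set F : Polynomial ℝ := ∑ m' ∈ S, Polynomial.C (g.coeff m' * (-1 : ℝ) ^ m' i1) *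
      ((Polynomial.X - 1) ^ (m' i0 + m' i1) * Polynomial.X ^ (B - m' i1)) with hF
  have hFeval : ∀ t : ℝ, 0 < t → F.eval t = t ^ B * eval (cpt n t) g := by
    intro t ht
    rw [heval t, Finset.mul_sum, hF, Polynomial.eval_finset_sum]
    refine Finset.sum_congr rfl fun m' hm' => ?_
    have hbB : m' i1 ≤ B := by rw [hB]; exact Finset.le_sup (f := fun m'' => m'' i1) hm'
    simp only [Polynomial.eval_mul, Polynomial.eval_C, Polynomial.eval_pow,
      Polynomial.eval_sub, Polynomial.eval_X, Polynomial.eval_one]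
    have h1 : t⁻¹ - 1 = (1 - t) / t := by field_simp
    rw [h1, div_pow, pow_sub₀ t ht.ne' hbB, pow_add,
      show ((1:ℝ) - t) = -1 * (t - 1) by ring, mul_pow]
    field_simp
  have hF0 : F = 0 := by
    refine Polynomial.eq_zero_of_infinite_isRoot F (Set.Infinite.mono ?_ (Set.Ioi_infinite 0))
    intro t ht
    simp only [Set.mem_setOf_eq, Polynomial.IsRoot]
    rw [hFeval t ht, hv t ht, mul_zero]
  -- top coefficient extraction
  have hcoefftop : ∑ m' ∈ S.filter (fun m' => m' i0 = A),
      g.coeff m' * (-1 : ℝ) ^ m' i1 = 0 := by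
    have h := congrArg (fun p => Polynomial.coeff p (A + B)) hF0
    simp only [hF, Polynomial.finset_sum_coeff, Polynomial.coeff_C_mul,
      Polynomial.coeff_zero] at h
    rw [Finset.sum_filter]
    refine Eq.trans (Finset.sum_congr rfl fun m' hm' => ?_) h
    have hbB : m' i1 ≤ B := by rw [hB]; exact Finset.le_sup (f := fun m'' => m'' i1) hm'
    have haA : m' i0 ≤ A := by rw [hA]; exact Finset.le_sup (f := fun m'' => m'' i0) hm'
    by_cases hAeq : m' i0 = A
    · rw [if_pos hAeq]
      have hnd : ((Polynomial.X - 1 : Polynomial ℝ) ^ (m' i0 + m' i1) *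
          Polynomial.X ^ (B - m' i1)).natDegree = A + B := by
        rw [aux_q_natDegree]; omega
      rw [← hnd, Polynomial.Monic.coeff_natDegree (aux_q_monic _ _), mul_one]
    · rw [if_neg hAeq, Polynomial.coeff_eq_zero_of_natDegree_lt
        (by rw [aux_q_natDegree]; omega), mul_zero]
  -- bottom coefficient extraction
  have hcoeffbot : ∑ m' ∈ S.filter (fun m' => m' i1 = B),
      g.coeff m' * (-1 : ℝ) ^ m' i0 = 0 := by
    have h := congrArg (fun p => Polynomial.coeff p 0) hF0
    simp only [hF, Polynomial.finset_sum_coeff, Polynomial.coeff_C_mul,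
      Polynomial.coeff_zero] at h
    rw [Finset.sum_filter]
    refine Eq.trans (Finset.sum_congr rfl fun m' hm' => ?_) h
    have hbB : m' i1 ≤ B := by rw [hB]; exact Finset.le_sup (f := fun m'' => m'' i1) hm'
    rw [aux_q_coeff_zero]
    by_cases hBeq : m' i1 = B
    · rw [if_pos hBeq]
      have he0 : B - m' i1 = 0 := by omega
      rw [he0, pow_zero, mul_one]
      have hsign : (-1 : ℝ) ^ m' i1 * (-1 : ℝ) ^ (m' i0 + m' i1) = (-1 : ℝ) ^ m' i0 := by
        rw [pow_add, mul_comm ((-1:ℝ) ^ m' i0) ((-1:ℝ) ^ m' i1), ← mul_assoc, ← pow_add,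
          Even.neg_one_pow ⟨m' i1, rfl⟩, one_mul]
      rw [mul_assoc, hsign]
    · rw [if_neg hBeq]
      have he0 : B - m' i1 ≠ 0 := by omega
      rw [zero_pow he0, mul_zero, mul_zero]
  -- dichotomies
  have hachtop : ∃ m' ∈ S, A = m' i0 := Finset.exists_mem_eq_sup S hSne _
  have hachbot : ∃ m' ∈ S, B = m' i1 := Finset.exists_mem_eq_sup S hSne _
  have hbeta0 : β ∈ S ∧ β i0 = A := by
    by_contra hcon
    have hall : ∀ m' ∈ S.filter (fun m' => m' i0 = A), 0 < g.coeff m' * (-1 : ℝ) ^ m' i1 := by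
      intro m' hm'
      obtain ⟨hm'S, hm'A⟩ := Finset.mem_filter.1 hm'
      have hne : m' ≠ β := by
        rintro rfl; exact hcon ⟨hm'S, hm'A⟩
      obtain ⟨hc, he⟩ := hSpos m' hm'S hne
      rw [Even.neg_one_pow (he i1), mul_one]; exact hc
    obtain ⟨m', hm'S, hm'A⟩ := hachtop
    have hne : (S.filter (fun m' => m' i0 = A)).Nonempty :=
      ⟨m', Finset.mem_filter.2 ⟨hm'S, hm'A.symm⟩⟩
    exact absurd hcoefftop (ne_of_gt (Finset.sum_pos hall hne))
  have hbeta1 : β ∈ S ∧ β i1 = B := by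
    by_contra hcon
    have hall : ∀ m' ∈ S.filter (fun m' => m' i1 = B), 0 < g.coeff m' * (-1 : ℝ) ^ m' i0 := by
      intro m' hm'
      obtain ⟨hm'S, hm'B⟩ := Finset.mem_filter.1 hm'
      have hne : m' ≠ β := by
        rintro rfl; exact hcon ⟨hm'S, hm'B⟩
      obtain ⟨hc, he⟩ := hSpos m' hm'S hne
      rw [Even.neg_one_pow (he i0), mul_one]; exact hc
    obtain ⟨m', hm'S, hm'B⟩ := hachbot
    have hne : (S.filter (fun m' => m' i1 = B)).Nonempty :=
      ⟨m', Finset.mem_filter.2 ⟨hm'S, hm'B.symm⟩⟩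
    exact absurd hcoeffbot (ne_of_gt (Finset.sum_pos hall hne))
  -- all α j lie in the plane, hence in S
  have hβP : P β := hSP β hbeta0.1
  have hαP : ∀ j, P (α j) := by
    intro j i hi2
    have h0 : (0 : ℝ) = ∑ j', lam j' * ((α j') i : ℝ) := by
      have := hbary i
      rwa [hβP i hi2, Nat.cast_zero] at this
    have hterm : ∀ j' ∈ Finset.univ, (0:ℝ) ≤ lam j' * ((α j') i : ℝ) :=
      fun j' _ => mul_nonneg (hlam j').le (Nat.cast_nonneg _)
    have := (Finset.sum_eq_zero_iff_of_nonneg hterm).1 h0.symm j (Finset.mem_univ j)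
    rcases mul_eq_zero.1 this with h | h
    · exact absurd h (hlam j).ne'
    · exact_mod_cast h
  have hαS : ∀ j, α j ∈ S := fun j =>
    Finset.mem_filter.2 ⟨mem_support_iff.2 (hpos j).ne', hαP j⟩
  -- each α j equals β
  have hαβ : ∀ j, α j = β := by
    intro j
    have h0 : α j i0 = β i0 :=
      aux_convex lam (fun j' => α j' i0) (β i0) hlam hlam1 (hbary i0)
        (fun j' => by show (α j') i0 ≤ β i0
                      rw [hbeta0.2, hA]; exact Finset.le_sup (f := fun m'' => m'' i0) (hαS j')) j
    have h1 : α j i1 = β i1 :=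
      aux_convex lam (fun j' => α j' i1) (β i1) hlam hlam1 (hbary i1)
        (fun j' => by show (α j') i1 ≤ β i1
                      rw [hbeta1.2, hB]; exact Finset.le_sup (f := fun m'' => m'' i1) (hαS j')) j
    ext i
    rcases Nat.lt_or_ge (i : ℕ) 2 with hi | hi
    · interval_cases h : (i : ℕ)
      · rwa [show i = i0 from Fin.ext (by simp [hi0, h])]
      · rwa [show i = i1 from Fin.ext (by simp [hi1, h])]
    · rw [hαP j i hi, hβP i hi]
  -- final contradiction : the top achiever set is {β}
  have hSβ : ∀ m' ∈ S, m' = β := by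
    intro m' hm'
    rcases hsupp (hSsupp m' hm') with ⟨j, hj⟩ | h
    · rw [← hj, hαβ j]
    · exact h
  have hfilter : S.filter (fun m' => m' i0 = A) = {β} := by
    apply Finset.eq_singleton_iff_unique_mem.2
    constructor
    · exact Finset.mem_filter.2 ⟨hbeta0.1, hbeta0.2⟩
    · intro x hx; exact hSβ x (Finset.mem_filter.1 hx).1
  rw [hfilter, Finset.sum_singleton] at hcoefftop
  have hcβ : g.coeff β ≠ 0 := mem_support_iff.1 (hSsupp β hbeta0.1)
  rcases mul_eq_zero.1 hcoefftop with h | h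
  · exact hcβ h
  · exact pow_ne_zero _ (by norm_num) h

private lemma not_sonc {n : ℕ} (hn : 2 ≤ n) (p : MvPolynomial (Fin n) ℝ)
    (hcurve : ∀ t : ℝ, 0 < t → eval (cpt n t) p = 0)
    (hy : eval (ypt n) p ≠ 0) : ¬ IsSONC n p := by
  rintro ⟨k, μ, g, hμ, hcirc, hnn, hdecomp⟩
  have hterm : ∀ t : ℝ, 0 < t → ∀ i, μ i * eval (cpt n t) (g i) = 0 := by
    intro t ht
    have h0 : ∑ i, μ i * eval (cpt n t) (g i) = 0 := by
      have h := hcurve t ht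
      rw [hdecomp, map_sum] at h
      simpa [MvPolynomial.smul_eval] using h
    have hnn' : ∀ i ∈ Finset.univ, (0:ℝ) ≤ μ i * eval (cpt n t) (g i) :=
      fun i _ => mul_nonneg (hμ i) (hnn i _)
    exact fun i => (Finset.sum_eq_zero_iff_of_nonneg hnn').1 h0 i (Finset.mem_univ i)
  have hzero : ∀ i, μ i * eval (ypt n) (g i) = 0 := by
    intro i
    by_cases hμi : μ i = 0
    · rw [hμi, zero_mul]
    · have hμpos : ∀ t : ℝ, 0 < t → eval (cpt n t) (g i) = 0 := by
        intro t ht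
        rcases mul_eq_zero.1 (hterm t ht i) with h | h
        · exact absurd h hμi
        · exact h
      have hkey := circuit_vanish hn (g i) (hcirc i) hμpos
      have hz : eval (ypt n) (g i) = 0 := by
        rw [eval_eq' (ypt n) (g i)]
        refine Finset.sum_eq_zero fun m hm => ?_
        obtain ⟨i2, hi2, hmi⟩ := hkey m hm
        have hy0 : ypt n i2 = 0 := by unfold ypt; rw [if_neg (by omega)]
        rw [Finset.prod_eq_zero (Finset.mem_univ i2) (by rw [hy0, zero_pow hmi]), mul_zero]
      rw [hz, mul_zero]
  apply hy
  rw [hdecomp, map_sum]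
  refine Finset.sum_eq_zero fun i _ => ?_
  rw [MvPolynomial.smul_eval, hzero i]

/-- `s(x_1,x_2) = (x_1 + x_2 + x_1x_2)^2` is a sum of squares but not SONC.
More generally, for `n ≥ 2` and `d_3, …, d_n ≥ 2`, the polynomial
`ŝ = (x_1 + x_2 + x_1x_2)^2 + ∑_{i=3}^n x_i^{2d_i}` is a sum of squares but not SONC;
with `d = max {2, d_3, …, d_n}` it lies in `Σ_{n,2d} ∖ C_{n,2d}`. -/
theorem stmt5 (n : ℕ) (hn : 2 ≤ n) (dd : Fin n → ℕ)
    (hdd : ∀ i : Fin n, 2 ≤ (i : ℕ) → 2 ≤ dd i) :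
    let i0 : Fin n := ⟨0, by omega⟩
    let i1 : Fin n := ⟨1, by omega⟩
    let shat : MvPolynomial (Fin n) ℝ :=
      (X i0 + X i1 + X i0 * X i1) ^ 2 +
        ∑ i ∈ Finset.univ.filter (fun i : Fin n => 2 ≤ (i : ℕ)), X i ^ (2 * dd i)
    let D : ℕ := 2 * max 2 ((Finset.univ.filter (fun i : Fin n => 2 ≤ (i : ℕ))).sup dd)
    (∃ (k : ℕ) (g : Fin k → MvPolynomial (Fin 2) ℝ),
        ((X 0 + X 1 + X 0 * X 1 : MvPolynomial (Fin 2) ℝ)) ^ 2 = ∑ i, (g i) ^ 2) ∧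
    ¬ IsSONC 2 (((X 0 + X 1 + X 0 * X 1 : MvPolynomial (Fin 2) ℝ)) ^ 2) ∧
    (∃ (k : ℕ) (g : Fin k → MvPolynomial (Fin n) ℝ), shat = ∑ i, (g i) ^ 2) ∧
    ¬ IsSONC n shat ∧
    shat ∈ sosCone n D \ soncCone n D := by
  intro i0 i1 shat D
  -- part 1 : s is SOS
  have part1 : ∃ (k : ℕ) (g : Fin k → MvPolynomial (Fin 2) ℝ),
      ((X 0 + X 1 + X 0 * X 1 : MvPolynomial (Fin 2) ℝ)) ^ 2 = ∑ i, (g i) ^ 2 :=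
    ⟨1, fun _ => X 0 + X 1 + X 0 * X 1, by rw [Fin.sum_univ_one]⟩
  -- part 2 : s is not SONC
  have part2 : ¬ IsSONC 2 (((X 0 + X 1 + X 0 * X 1 : MvPolynomial (Fin 2) ℝ)) ^ 2) := by
    refine not_sonc le_rfl _ ?_ ?_
    · intro t ht
      have e0 : cpt 2 t 0 = t - 1 := rfl
      have e1 : cpt 2 t 1 = t⁻¹ - 1 := rfl
      simp only [eval_pow, eval_add, eval_mul, eval_X, e0, e1]
      have hz : (t - 1) + (t⁻¹ - 1) + (t - 1) * (t⁻¹ - 1) = 0 := by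
        field_simp
        ring
      rw [hz]
      norm_num
    · have e0 : ypt 2 0 = 1 := rfl
      have e1 : ypt 2 1 = 1 := rfl
      simp only [eval_pow, eval_add, eval_mul, eval_X, e0, e1]
      norm_num
  -- part 3 : shat is SOS
  have part3 : ∃ (k : ℕ) (g : Fin k → MvPolynomial (Fin n) ℝ), shat = ∑ i, (g i) ^ 2 := by
    refine ⟨n + 1, Fin.cons (X i0 + X i1 + X i0 * X i1)
      (fun i : Fin n => if 2 ≤ (i : ℕ) then X i ^ (dd i) else 0), ?_⟩
    rw [Fin.sum_univ_succ]
    simp only [Fin.cons_zero, Fin.cons_succ]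
    show (X i0 + X i1 + X i0 * X i1) ^ 2 +
        ∑ i ∈ Finset.univ.filter (fun i : Fin n => 2 ≤ (i : ℕ)), X i ^ (2 * dd i) = _
    congr 1
    rw [Finset.sum_filter]
    refine Finset.sum_congr rfl fun i _ => ?_
    by_cases h : 2 ≤ (i : ℕ)
    · rw [if_pos h, if_pos h, mul_comm 2 (dd i), pow_mul]
    · rw [if_neg h, if_neg h]
      norm_num
  -- curve and point evaluations for shat
  have hcurve : ∀ t : ℝ, 0 < t → eval (cpt n t) shat = 0 := by
    intro t ht
    have e0 : cpt n t i0 = t - 1 := rfl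
    have e1 : cpt n t i1 = t⁻¹ - 1 := rfl
    show eval (cpt n t) ((X i0 + X i1 + X i0 * X i1) ^ 2 + _) = 0
    rw [map_add, map_sum]
    have h1 : eval (cpt n t) ((X i0 + X i1 + X i0 * X i1) ^ 2) = 0 := by
      simp only [eval_pow, eval_add, eval_mul, eval_X, e0, e1]
      have hz : (t - 1) + (t⁻¹ - 1) + (t - 1) * (t⁻¹ - 1) = 0 := by
        field_simp
        ring
      rw [hz]
      norm_num
    have h2 : ∀ i ∈ Finset.univ.filter (fun i : Fin n => 2 ≤ (i : ℕ)),
        eval (cpt n t) (X i ^ (2 * dd i)) = 0 := by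
      intro i hi
      have hi2 : 2 ≤ (i : ℕ) := (Finset.mem_filter.1 hi).2
      have hc0 : cpt n t i = 0 := by
        unfold cpt
        rw [if_neg (by omega), if_neg (by omega)]
      rw [eval_pow, eval_X, hc0, zero_pow]
      have := hdd i hi2
      omega
    rw [h1, Finset.sum_eq_zero h2, add_zero]
  have hypt : eval (ypt n) shat ≠ 0 := by
    have e0 : ypt n i0 = 1 := rfl
    have e1 : ypt n i1 = 1 := rfl
    show eval (ypt n) ((X i0 + X i1 + X i0 * X i1) ^ 2 + _) ≠ 0
    rw [map_add, map_sum]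
    have h1 : eval (ypt n) ((X i0 + X i1 + X i0 * X i1) ^ 2) = 9 := by
      simp only [eval_pow, eval_add, eval_mul, eval_X, e0, e1]
      norm_num
    have h2 : ∀ i ∈ Finset.univ.filter (fun i : Fin n => 2 ≤ (i : ℕ)),
        eval (ypt n) (X i ^ (2 * dd i)) = 0 := by
      intro i hi
      have hi2 : 2 ≤ (i : ℕ) := (Finset.mem_filter.1 hi).2
      have hy0 : ypt n i = 0 := by
        unfold ypt
        rw [if_neg (by omega)]
      rw [eval_pow, eval_X, hy0, zero_pow]
      have := hdd i hi2
      omega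
    rw [h1, Finset.sum_eq_zero h2, add_zero]
    norm_num
  -- part 4 : shat is not SONC
  have part4 : ¬ IsSONC n shat := not_sonc hn shat hcurve hypt
  -- degree bound
  have hD4 : 4 ≤ D := by
    have : (2:ℕ) ≤ max 2 ((Finset.univ.filter (fun i : Fin n => 2 ≤ (i : ℕ))).sup dd) :=
      le_max_left _ _
    show 4 ≤ 2 * max 2 _
    omega
  have hdeg : shat.totalDegree ≤ D := by
    refine le_trans (MvPolynomial.totalDegree_add _ _) (sup_le ?_ ?_)
    · refine le_trans (MvPolynomial.totalDegree_pow _ _) ?_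
      have h1 : (X i0 + X i1 + X i0 * X i1 : MvPolynomial (Fin n) ℝ).totalDegree ≤ 2 := by
        refine le_trans (MvPolynomial.totalDegree_add _ _) (sup_le ?_ ?_)
        · refine le_trans (MvPolynomial.totalDegree_add _ _) (sup_le ?_ ?_) <;>
            rw [MvPolynomial.totalDegree_X] <;> omega
        · refine le_trans (MvPolynomial.totalDegree_mul _ _) ?_
          rw [MvPolynomial.totalDegree_X, MvPolynomial.totalDegree_X]
      have := Nat.mul_le_mul_left 2 h1
      omega
    · refine le_trans (MvPolynomial.totalDegree_finset_sum _ _) (Finset.sup_le ?_)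
      intro i hi
      rw [MvPolynomial.totalDegree_X_pow]
      have hle : dd i ≤ (Finset.univ.filter (fun i : Fin n => 2 ≤ (i : ℕ))).sup dd :=
        Finset.le_sup hi
      have hle2 : dd i ≤ max 2 ((Finset.univ.filter (fun i : Fin n => 2 ≤ (i : ℕ))).sup dd) :=
        le_trans hle (le_max_right _ _)
      show 2 * dd i ≤ 2 * max 2 _
      omega
  exact ⟨part1, part2, part3, part4, ⟨part3, hdeg⟩, fun h => part4 h.1⟩
end

section
/- A polynomial p ∈ ℝ[x_1,…,x_n] of degree at most 2d is a SONC polynomial if and only if its homogenization p̄(x_0,…,x_n) = x_0^{2d} p(x_1/x_0,…,x_n/x_0), a homogeneous polynomial of degree 2d in n+1 variables, is a SONC polynomial. -/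
open MvPolynomial Finset

namespace Stmt7

open Finsupp in
theorem dg_eq_sum {N : ℕ} (m : Fin N →₀ ℕ) : (m.sum fun _ e => e) = ∑ i, m i :=
  Finsupp.sum_fintype _ _ fun _ => rfl

def dg {N : ℕ} (m : Fin N →₀ ℕ) : ℕ := m.sum fun _ e => e

theorem dg_cast {N : ℕ} (m : Fin N →₀ ℕ) : (dg m : ℝ) = ∑ i, (m i : ℝ) := by
  rw [dg, dg_eq_sum]; push_cast; rfl

noncomputable def hmap {n : ℕ} (D : ℕ) (m : Fin n →₀ ℕ) : Fin (n + 1) →₀ ℕ :=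
  Finsupp.cons (D - dg m) m

theorem hmap_injective {n : ℕ} (D : ℕ) : Function.Injective (hmap (n := n) D) := by
  intro a b h
  have := congrArg Finsupp.tail h
  simpa [hmap, Finsupp.tail_cons] using this

theorem homogenize_eq {n : ℕ} (D : ℕ) (p : MvPolynomial (Fin n) ℝ) :
    homogenize n D p = AddMonoidAlgebra.mapDomainLinearMap ℝ ℝ (hmap D) p := by
  rw [homogenize]
  conv_rhs => rw [p.as_sum]
  rw [map_sum]
  apply Finset.sum_congr rfl
  intro m hm
  rw [← single_eq_monomial, ← single_eq_monomial, AddMonoidAlgebra.mapDomainLinearMap_single]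
  rfl

theorem homogenize_smul {n : ℕ} (D : ℕ) (c : ℝ) (p : MvPolynomial (Fin n) ℝ) :
    homogenize n D (c • p) = c • homogenize n D p := by
  rw [homogenize_eq, homogenize_eq]
  exact map_smul _ c p

theorem homogenize_sum {n k : ℕ} (D : ℕ) (f : Fin k → MvPolynomial (Fin n) ℝ) :
    homogenize n D (∑ i, f i) = ∑ i, homogenize n D (f i) := by
  simp only [homogenize_eq]
  exact map_sum _ _ _

theorem coeff_homogenize {n : ℕ} (D : ℕ) (p : MvPolynomial (Fin n) ℝ) (m : Fin n →₀ ℕ) :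
    (homogenize n D p).coeff (hmap D m) = p.coeff m := by
  rw [homogenize_eq]
  exact Finsupp.mapDomain_apply (hmap_injective D) (AddMonoidAlgebra.coeff p) m

theorem support_homogenize {n : ℕ} (D : ℕ) (p : MvPolynomial (Fin n) ℝ) :
    (homogenize n D p).support ⊆ p.support.image (hmap D) := by
  rw [homogenize_eq]
  exact Finsupp.mapDomain_support (s := AddMonoidAlgebra.coeff p)

theorem homogenize_isHomogeneous {n D : ℕ} (p : MvPolynomial (Fin n) ℝ)
    (h : p.totalDegree ≤ D) : (homogenize n D p).IsHomogeneous D := by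
  rw [homogenize]
  apply IsHomogeneous.sum
  intro m hm
  apply isHomogeneous_monomial
  have h1 : dg m ≤ D := le_trans (MvPolynomial.le_totalDegree hm) h
  show Finsupp.degree (Finsupp.cons (D - dg m) m) = D
  have h2 : Finsupp.degree (Finsupp.cons (D - dg m) m) = (D - dg m) + dg m := by
    show ((Finsupp.cons (D - dg m) m).sum fun _ e => e) = _
    rw [Finsupp.sum_cons]; rfl
  rw [h2, Nat.sub_add_cancel h1]

end Stmt7
namespace Stmt7

noncomputable def qd {N : ℕ} (m : Fin N →₀ ℕ) : ℝ := ∑ i, (m i : ℝ) ^ 2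

theorem eq_of_avg {r : ℕ} {lam x : Fin (r + 1) → ℝ} {c : ℝ} (hlam : ∀ j, 0 < lam j)
    (hsum : ∑ j, lam j = 1) (havg : ∑ j, lam j * x j = c) (hle : ∀ j, x j ≤ c) :
    ∀ j, x j = c := by
  have h0 : ∑ j, lam j * (c - x j) = 0 := by
    simp only [mul_sub, Finset.sum_sub_distrib, ← Finset.sum_mul, hsum, one_mul, havg, sub_self]
  intro j
  have := (Finset.sum_eq_zero_iff_of_nonneg (fun j _ =>
    mul_nonneg (hlam j).le (sub_nonneg.2 (hle j)))).1 h0 j (Finset.mem_univ j)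
  have := mul_eq_zero.1 this
  rcases this with h | h
  · exact absurd h (hlam j).ne'
  · linarith [sub_eq_zero.1 h]

theorem dg_beta {N r : ℕ} {α : Fin (r + 1) → (Fin N →₀ ℕ)} {β : Fin N →₀ ℕ}
    {lam : Fin (r + 1) → ℝ}
    (hβ : ∀ i, (β i : ℝ) = ∑ j, lam j * ((α j) i : ℝ)) :
    (dg β : ℝ) = ∑ j, lam j * (dg (α j) : ℝ) := by
  rw [dg_cast]
  simp_rw [hβ, dg_cast, Finset.mul_sum]
  rw [Finset.sum_comm]

/-- Variance contradiction: an inner point of a genuine circuit (`r ≥ 1`) cannot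
maximize `qd` among the vertices. -/
theorem inner_variance {N r : ℕ} {α : Fin (r + 1) → (Fin N →₀ ℕ)} {β : Fin N →₀ ℕ}
    {lam : Fin (r + 1) → ℝ}
    (hai : AffineIndependent ℝ fun j => expVec N (α j))
    (hlam : ∀ j, 0 < lam j) (hsum : ∑ j, lam j = 1)
    (hβ : ∀ i, (β i : ℝ) = ∑ j, lam j * ((α j) i : ℝ))
    (hr : 1 ≤ r) (hq : ∀ j, qd (α j) ≤ qd β) : False := by
  -- variance identity
  have key : ∑ j, lam j * (∑ i, ((α j i : ℝ) - (β i : ℝ)) ^ 2)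
      = (∑ j, lam j * qd (α j)) - qd β := by
    have expand : ∀ j, (∑ i, ((α j i : ℝ) - (β i : ℝ)) ^ 2)
        = qd (α j) - 2 * (∑ i, (α j i : ℝ) * (β i : ℝ)) + qd β := by
      intro j
      simp only [sub_sq, qd, Finset.sum_add_distrib, Finset.sum_sub_distrib, Finset.mul_sum]
      congr 1; congr 1
      apply Finset.sum_congr rfl; intro i _; ring
    simp_rw [expand, mul_add, mul_sub, Finset.sum_add_distrib, Finset.sum_sub_distrib,
      ← Finset.sum_mul, hsum, one_mul]
    have hmid : ∑ j, lam j * (2 * ∑ i, (α j i : ℝ) * (β i : ℝ)) = 2 * qd β := by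
      have : ∀ j, lam j * (2 * ∑ i, (α j i : ℝ) * (β i : ℝ))
          = 2 * ∑ i, (β i : ℝ) * (lam j * (α j i : ℝ)) := by
        intro j; rw [Finset.mul_sum, Finset.mul_sum, Finset.mul_sum]
        apply Finset.sum_congr rfl; intro i _; ring
      simp_rw [this, ← Finset.mul_sum]
      rw [Finset.sum_comm]
      simp_rw [← Finset.mul_sum, ← hβ, qd]
      congr 1
      apply Finset.sum_congr rfl; intro i _; ring
    rw [hmid]; ring
  -- LHS positive
  have h01 : (0 : Fin (r + 1)) ≠ 1 := by
    have : (1 : ℕ) < r + 1 := by omega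
    simp [Fin.ext_iff, Fin.val_one, Nat.mod_eq_of_lt this]
  have hne : expVec N (α 0) ≠ expVec N (α 1) := fun h => h01 (hai.injective h)
  have hex : ∃ j i, (α j i : ℝ) ≠ (β i : ℝ) := by
    by_contra hcon
    push_neg at hcon
    apply hne
    funext i
    rw [show expVec N (α 0) i = (α 0 i : ℝ) from rfl, show expVec N (α 1) i = (α 1 i : ℝ) from rfl,
      hcon 0 i, hcon 1 i]
  obtain ⟨j0, i0, hji⟩ := hex
  have hpos : 0 < ∑ j, lam j * (∑ i, ((α j i : ℝ) - (β i : ℝ)) ^ 2) := by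
    apply Finset.sum_pos'
    · intro j _
      apply mul_nonneg (hlam j).le
      apply Finset.sum_nonneg; intro i _; positivity
    · refine ⟨j0, Finset.mem_univ _, ?_⟩
      apply mul_pos (hlam j0)
      apply Finset.sum_pos' (fun i _ => by positivity)
      exact ⟨i0, Finset.mem_univ _, by
        have := sub_ne_zero.2 hji
        positivity⟩
  -- RHS nonpositive
  have hle : (∑ j, lam j * qd (α j)) ≤ qd β := by
    calc (∑ j, lam j * qd (α j)) ≤ ∑ j, lam j * qd β := by
          apply Finset.sum_le_sum; intro j _; exact mul_le_mul_of_nonneg_left (hq j) (hlam j).le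
      _ = qd β := by rw [← Finset.sum_mul, hsum, one_mul]
  rw [key] at hpos
  linarith

theorem beta_eq_of_r_zero {N : ℕ} {α : Fin 1 → (Fin N →₀ ℕ)} {β : Fin N →₀ ℕ}
    {lam : Fin 1 → ℝ} (hsum : ∑ j, lam j = 1)
    (hβ : ∀ i, (β i : ℝ) = ∑ j, lam j * ((α j) i : ℝ)) : β = α 0 := by
  have hl : lam 0 = 1 := by simpa using hsum
  ext i
  have := hβ i
  rw [Fin.sum_univ_one, hl, one_mul] at this
  exact_mod_cast this

end Stmt7
namespace Stmt7

/-- At a point `u` that is degree-extremal and `qd`-maximal within its degree slice,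
every nonnegatively-weighted circuit contributes a nonnegative coefficient, and circuits
actually containing `u` contribute positively; hence the coefficient of `q` at `u` is
positive. -/
theorem coeff_q_pos {N k : ℕ} {μ : Fin k → ℝ} {g : Fin k → MvPolynomial (Fin N) ℝ}
    (hμ : ∀ i, 0 ≤ μ i) (hc : ∀ i, IsCircuit N (g i))
    {q : MvPolynomial (Fin N) ℝ} (hq : q = ∑ i, μ i • g i)
    {E : Finset (Fin N →₀ ℕ)} (hE : ∀ i m, μ i ≠ 0 → m ∈ (g i).support → m ∈ E)
    {u : Fin N →₀ ℕ} (hu : ∃ i, μ i ≠ 0 ∧ u ∈ (g i).support)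
    {s : ℝ} (hs : s ≠ 0)
    (hside : ∀ m ∈ E, s * (dg m : ℝ) ≤ s * (dg u : ℝ))
    (hqd : ∀ m ∈ E, dg m = dg u → qd m ≤ qd u) :
    0 < q.coeff u := by
  have hterm : ∀ i, μ i ≠ 0 → u ∈ (g i).support → 0 < (g i).coeff u := by
    intro i hi hui
    obtain ⟨r, α, β, lam, hrn, heven, hai, hlam, hsum, hβ, hcoeffα, hsupp⟩ := hc i
    have hαE : ∀ j, α j ∈ E := fun j =>
      hE i _ hi (MvPolynomial.mem_support_iff.2 (hcoeffα j).ne')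
    rcases hsupp hui with h | h
    · obtain ⟨j, hj⟩ := h
      rw [← hj]; exact hcoeffα j
    · -- u = β
      have huβ : u = β := h
      rcases Nat.eq_zero_or_pos r with hr0 | hr1
      · subst hr0
        have := beta_eq_of_r_zero hsum hβ
        rw [huβ, this]
        exact hcoeffα 0
      · exfalso
        -- all vertices have the same degree as u
        have havg : ∑ j, lam j * (s * (dg (α j) : ℝ)) = s * (dg u : ℝ) := by
          have := dg_beta (α := α) (β := β) (lam := lam) hβ
          rw [huβ, this, Finset.mul_sum]
          apply Finset.sum_congr rfl; intro j _; ring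
        have hle : ∀ j, s * (dg (α j) : ℝ) ≤ s * (dg u : ℝ) := fun j => hside _ (hαE j)
        have hdeq : ∀ j, dg (α j) = dg u := by
          intro j
          have := eq_of_avg hlam hsum havg hle j
          have h2 : (dg (α j) : ℝ) = (dg u : ℝ) := mul_left_cancel₀ hs this
          exact_mod_cast h2
        have hqle : ∀ j, qd (α j) ≤ qd β := by
          intro j
          rw [← huβ]
          exact hqd _ (hαE j) (hdeq j)
        exact inner_variance hai hlam hsum hβ hr1 hqle
  have hcoeff : q.coeff u = ∑ i, μ i * (g i).coeff u := by
    rw [hq, MvPolynomial.coeff_sum]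
    apply Finset.sum_congr rfl; intro i _
    rw [MvPolynomial.coeff_smul, smul_eq_mul]
  rw [hcoeff]
  apply Finset.sum_pos'
  · intro i _
    rcases eq_or_ne (μ i) 0 with h | h
    · simp [h]
    · by_cases hui : u ∈ (g i).support
      · exact mul_nonneg (hμ i) (hterm i h hui).le
      · simp [MvPolynomial.notMem_support_iff.1 hui]
  · obtain ⟨i, hi, hui⟩ := hu
    exact ⟨i, Finset.mem_univ i, mul_pos ((hμ i).lt_of_ne (Ne.symm hi)) (hterm i hi hui)⟩

theorem exists_dominating {N k : ℕ} {μ : Fin k → ℝ} {g : Fin k → MvPolynomial (Fin N) ℝ}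
    (hμ : ∀ i, 0 ≤ μ i) (hc : ∀ i, IsCircuit N (g i))
    {q : MvPolynomial (Fin N) ℝ} (hq : q = ∑ i, μ i • g i)
    {i0 : Fin k} (hi0 : μ i0 ≠ 0) {m0 : Fin N →₀ ℕ} (hm0 : m0 ∈ (g i0).support) :
    (∃ u ∈ q.support, dg m0 ≤ dg u) ∧ (∃ u ∈ q.support, dg u ≤ dg m0) := by
  classical
  set E : Finset (Fin N →₀ ℕ) :=
    Finset.univ.biUnion (fun i => if μ i = 0 then ∅ else (g i).support) with hEdef
  have hmemE : ∀ m, m ∈ E ↔ ∃ i, μ i ≠ 0 ∧ m ∈ (g i).support := by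
    intro m
    simp only [hEdef, Finset.mem_biUnion, Finset.mem_univ, true_and]
    constructor
    · rintro ⟨i, hi⟩
      by_cases h : μ i = 0
      · simp [h] at hi
      · rw [if_neg h] at hi; exact ⟨i, h, hi⟩
    · rintro ⟨i, hi, hm⟩
      exact ⟨i, by rw [if_neg hi]; exact hm⟩
  have hE : ∀ i m, μ i ≠ 0 → m ∈ (g i).support → m ∈ E := fun i m hi hm =>
    (hmemE m).2 ⟨i, hi, hm⟩
  have hm0E : m0 ∈ E := hE _ _ hi0 hm0
  have hEne : E.Nonempty := ⟨m0, hm0E⟩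
  constructor
  · -- max side
    obtain ⟨m1, hm1E, hm1⟩ := Finset.exists_mem_eq_sup' hEne dg
    set M := E.sup' hEne dg with hM
    set F := E.filter (fun m => dg m = M) with hF
    have hFne : F.Nonempty := ⟨m1, Finset.mem_filter.2 ⟨hm1E, hm1.symm⟩⟩
    obtain ⟨u, huF, humax⟩ := Finset.exists_max_image F qd hFne
    have huE : u ∈ E := (Finset.mem_filter.1 huF).1
    have hudg : dg u = M := (Finset.mem_filter.1 huF).2
    have hpos : 0 < q.coeff u := by
      refine coeff_q_pos hμ hc hq hE ((hmemE u).1 huE) (one_ne_zero (α := ℝ)) ?_ ?_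
      · intro m hm
        simp only [one_mul]
        have : dg m ≤ M := Finset.le_sup' (f := dg) hm
        rw [← hudg] at this
        exact_mod_cast this
      · intro m hm hdm
        exact humax m (Finset.mem_filter.2 ⟨hm, by rw [hdm, hudg]⟩)
    refine ⟨u, MvPolynomial.mem_support_iff.2 hpos.ne', ?_⟩
    rw [hudg]
    exact Finset.le_sup' (f := dg) hm0E
  · -- min side
    obtain ⟨m1, hm1E, hm1⟩ := Finset.exists_mem_eq_inf' hEne dg
    set M := E.inf' hEne dg with hM
    set F := E.filter (fun m => dg m = M) with hF
    have hFne : F.Nonempty := ⟨m1, Finset.mem_filter.2 ⟨hm1E, hm1.symm⟩⟩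
    obtain ⟨u, huF, humax⟩ := Finset.exists_max_image F qd hFne
    have huE : u ∈ E := (Finset.mem_filter.1 huF).1
    have hudg : dg u = M := (Finset.mem_filter.1 huF).2
    have hpos : 0 < q.coeff u := by
      refine coeff_q_pos hμ hc hq hE ((hmemE u).1 huE) (neg_ne_zero.2 (one_ne_zero (α := ℝ))) ?_ ?_
      · intro m hm
        have h1 : M ≤ dg m := Finset.inf'_le _ hm
        rw [← hudg] at h1
        have : (dg u : ℝ) ≤ (dg m : ℝ) := by exact_mod_cast h1
        nlinarith
      · intro m hm hdm
        exact humax m (Finset.mem_filter.2 ⟨hm, by rw [hdm, hudg]⟩)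
    refine ⟨u, MvPolynomial.mem_support_iff.2 hpos.ne', ?_⟩
    rw [hudg]
    exact Finset.inf'_le _ hm0E

end Stmt7
namespace Stmt7

theorem isCircuit_one (N : ℕ) : IsCircuit N (1 : MvPolynomial (Fin N) ℝ) := by
  refine ⟨0, fun _ => 0, 0, fun _ => 1, Nat.zero_le N, by simp, ?_, by norm_num, by simp, by simp,
    by simp, ?_⟩
  · have : Subsingleton (Fin (0 + 1)) := by rw [Nat.zero_add]; infer_instance
    exact affineIndependent_of_subsingleton ℝ _
  · intro m hm
    simp only [Finset.mem_coe] at hm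
    have : (1 : MvPolynomial (Fin N) ℝ) = MvPolynomial.monomial 0 1 := by
      rw [← MvPolynomial.single_eq_monomial]; rfl
    rw [this] at hm
    have := MvPolynomial.support_monomial_subset hm
    simp only [Finset.mem_singleton] at this
    right
    simp [this]

theorem eval_one_nonneg (N : ℕ) : ∀ x : Fin N → ℝ, 0 ≤ MvPolynomial.eval x (1 : MvPolynomial (Fin N) ℝ) := by
  intro x; simp

/-- Evenness of the degree of an even exponent vector. -/
theorem even_dg {N : ℕ} {m : Fin N →₀ ℕ} (h : ∀ i, Even (m i)) : Even (dg m) := by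
  rw [dg, dg_eq_sum]
  exact Finset.even_sum _ fun i _ => h i

/-- A family is affinely independent as soon as its "tails" are. -/
theorem affineIndependent_of_tail {ι N : ℕ} (v : Fin ι → (Fin (N + 1) → ℝ))
    (h : AffineIndependent ℝ fun j => (v j) ∘ Fin.succ) : AffineIndependent ℝ v := by
  rw [affineIndependent_iff] at h ⊢
  intro s w hw h0
  apply h s w hw
  funext i
  have := congrFun h0 (Fin.succ i)
  simpa [Finset.sum_apply] using this

theorem expVec_hmap_succ {n D : ℕ} (m : Fin n →₀ ℕ) :
    (expVec (n + 1) (hmap D m)) ∘ Fin.succ = expVec n m := by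
  funext i
  simp [expVec, hmap, Finsupp.cons_succ]

theorem isCircuitWith_homogenize {n D r : ℕ} {g : MvPolynomial (Fin n) ℝ}
    {α : Fin (r + 1) → (Fin n →₀ ℕ)} {β : Fin n →₀ ℕ} {lam : Fin (r + 1) → ℝ}
    (h : IsCircuitWith n g r α β lam)
    (hD : ∀ j, dg (α j) ≤ D) (hevenD : Even D) :
    IsCircuitWith (n + 1) (homogenize n D g) r (fun j => hmap D (α j)) (hmap D β) lam := by
  obtain ⟨hrn, heven, hai, hlam, hsum, hβ, hcoeffα, hsupp⟩ := h
  have hdgβR : (dg β : ℝ) = ∑ j, lam j * (dg (α j) : ℝ) := dg_beta hβ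
  have hdgβ : dg β ≤ D := by
    have : (dg β : ℝ) ≤ D := by
      rw [hdgβR]
      calc ∑ j, lam j * (dg (α j) : ℝ) ≤ ∑ j, lam j * (D : ℝ) := by
            apply Finset.sum_le_sum
            intro j _
            exact mul_le_mul_of_nonneg_left (by exact_mod_cast hD j) (hlam j).le
        _ = D := by rw [← Finset.sum_mul, hsum, one_mul]
    exact_mod_cast this
  refine ⟨by omega, ?_, ?_, hlam, hsum, ?_, ?_, ?_⟩
  · -- evenness
    intro j i
    refine Fin.cases ?_ ?_ i
    · rw [show (hmap D (α j)) 0 = D - dg (α j) from Finsupp.cons_zero _ _]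
      rw [Nat.even_sub (hD j)]
      simp [hevenD, even_dg (heven j)]
    · intro i
      rw [show (hmap D (α j)) i.succ = (α j) i from Finsupp.cons_succ _ _ _]
      exact heven j i
  · -- affine independence
    apply affineIndependent_of_tail
    have : (fun j => (expVec (n + 1) (hmap D (α j))) ∘ Fin.succ) = fun j => expVec n (α j) := by
      funext j; exact expVec_hmap_succ (α j)
    rw [this]
    exact hai
  · -- barycentric coordinates
    intro i
    refine Fin.cases ?_ ?_ i
    · rw [show (hmap D β) 0 = D - dg β from Finsupp.cons_zero _ _]
      have : ∀ j, (hmap D (α j)) 0 = D - dg (α j) := fun j => Finsupp.cons_zero _ _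
      simp_rw [this]
      rw [Nat.cast_sub hdgβ]
      have hc : ∀ j, ((D - dg (α j) : ℕ) : ℝ) = (D : ℝ) - (dg (α j) : ℝ) := fun j =>
        Nat.cast_sub (hD j)
      simp_rw [hc, mul_sub, Finset.sum_sub_distrib, ← Finset.sum_mul, hsum, one_mul, hdgβR]
    · intro i
      rw [show (hmap D β) i.succ = β i from Finsupp.cons_succ _ _ _]
      have : ∀ j, (hmap D (α j)) i.succ = (α j) i := fun j => Finsupp.cons_succ _ _ _
      simp_rw [this]
      exact hβ i
  · -- coefficients
    intro j
    rw [coeff_homogenize]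
    exact hcoeffα j
  · -- support
    intro m hm
    simp only [Finset.mem_coe] at hm
    have := support_homogenize D g hm
    rw [Finset.mem_image] at this
    obtain ⟨m', hm', rfl⟩ := this
    rcases hsupp hm' with h | h
    · obtain ⟨j, hj⟩ := h
      exact Or.inl ⟨j, by simp only []; rw [hj]⟩
    · right
      simp only [Set.mem_singleton_iff] at h ⊢
      rw [h]

end Stmt7
namespace Stmt7

theorem eval_homogenize {n D : ℕ} {g : MvPolynomial (Fin n) ℝ}
    (hD : ∀ m ∈ g.support, dg m ≤ D) (y : Fin (n + 1) → ℝ) (hy : y 0 ≠ 0) :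
    MvPolynomial.eval y (homogenize n D g)
      = (y 0) ^ D * MvPolynomial.eval (fun i => y i.succ / y 0) g := by
  rw [homogenize, map_sum, MvPolynomial.eval_eq' (fun i => y i.succ / y 0) g, Finset.mul_sum]
  apply Finset.sum_congr rfl
  intro m hm
  rw [MvPolynomial.eval_monomial]
  rw [Finsupp.prod_fintype _ _ (fun i => pow_zero (y i))]
  rw [Fin.prod_univ_succ]
  have h0 : (Finsupp.cons (D - m.sum fun _ e => e) m) 0 = D - dg m := Finsupp.cons_zero _ _
  have hsucc : ∀ i : Fin n, (Finsupp.cons (D - m.sum fun _ e => e) m) i.succ = m i :=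
    fun i => Finsupp.cons_succ _ _ _
  rw [h0]
  simp_rw [hsucc]
  have hy0 : ∀ e : ℕ, (y 0) ^ e ≠ 0 := fun e => pow_ne_zero e hy
  have hprod : ∏ i : Fin n, (y i.succ / y 0) ^ m i
      = (∏ i : Fin n, y i.succ ^ m i) / (y 0) ^ dg m := by
    simp_rw [div_pow]
    rw [Finset.prod_div_distrib, Finset.prod_pow_eq_pow_sum, dg, dg_eq_sum]
  rw [hprod]
  have hpow : (y 0) ^ D = (y 0) ^ (D - dg m) * (y 0) ^ dg m := by
    rw [← pow_add, Nat.sub_add_cancel (hD m hm)]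
  rw [hpow]
  field_simp

theorem homogenize_nonneg {n D : ℕ} {g : MvPolynomial (Fin n) ℝ}
    (hg : ∀ x, 0 ≤ MvPolynomial.eval x g) (hDs : ∀ m ∈ g.support, dg m ≤ D)
    (hevenD : Even D) :
    ∀ y : Fin (n + 1) → ℝ, 0 ≤ MvPolynomial.eval y (homogenize n D g) := by
  have hcase : ∀ y : Fin (n + 1) → ℝ, y 0 ≠ 0 → 0 ≤ MvPolynomial.eval y (homogenize n D g) := by
    intro y hy
    rw [eval_homogenize hDs y hy]
    exact mul_nonneg (hevenD.pow_nonneg _) (hg _)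
  intro y
  rcases eq_or_ne (y 0) 0 with hy | hy
  · -- continuity argument
    set f : ℝ → ℝ := fun t => MvPolynomial.eval (Function.update y 0 t) (homogenize n D g)
      with hf
    have hcont : Continuous f :=
      (MvPolynomial.continuous_eval _).comp (continuous_const.update 0 continuous_id)
    have hf0 : f 0 = MvPolynomial.eval y (homogenize n D g) := by
      rw [hf]
      simp only []
      rw [← hy, Function.update_eq_self]
    have ht : Filter.Tendsto f (nhdsWithin 0 {(0:ℝ)}ᶜ) (nhds (MvPolynomial.eval y (homogenize n D g))) := by
      rw [← hf0]
      exact (hcont.tendsto 0).mono_left nhdsWithin_le_nhds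
    refine ge_of_tendsto ht ?_
    filter_upwards [self_mem_nhdsWithin] with t ht'
    have h0 : (Function.update y 0 t) 0 = t := Function.update_self 0 t y
    apply hcase
    rw [h0]
    exact ht'
  · exact hcase y hy

end Stmt7
namespace Stmt7

theorem isSONC_homogenize {n d : ℕ} {p : MvPolynomial (Fin n) ℝ} (hdeg : p.totalDegree ≤ 2 * d)
    (h : IsSONC n p) : IsSONC (n + 1) (homogenize n (2 * d) p) := by
  classical
  obtain ⟨k, μ, g, hμ, hcirc, hnn, hsum⟩ := h
  have hbound : ∀ i, μ i ≠ 0 → ∀ m ∈ (g i).support, dg m ≤ 2 * d := by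
    intro i hi m hm
    obtain ⟨⟨u, hu, hle⟩, -⟩ := exists_dominating hμ hcirc hsum hi hm
    calc dg m ≤ dg u := hle
      _ ≤ p.totalDegree := MvPolynomial.le_totalDegree hu
      _ ≤ 2 * d := hdeg
  refine ⟨k, μ, fun i => if μ i = 0 then 1 else homogenize n (2 * d) (g i), hμ, ?_, ?_, ?_⟩
  · intro i
    by_cases hi : μ i = 0
    · simp only [if_pos hi]
      exact isCircuit_one (n + 1)
    · simp only [if_neg hi]
      obtain ⟨r, α, β, lam, hC⟩ := hcirc i
      have hD : ∀ j, dg (α j) ≤ 2 * d := by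
        intro j
        exact hbound i hi _ (MvPolynomial.mem_support_iff.2 (hC.2.2.2.2.2.2.1 j).ne')
      exact ⟨r, _, _, lam, isCircuitWith_homogenize hC hD (even_two_mul d)⟩
  · intro i x
    by_cases hi : μ i = 0
    · simp [if_pos hi]
    · simp only [if_neg hi]
      exact homogenize_nonneg (hnn i) (hbound i hi) (even_two_mul d) x
  · rw [hsum, homogenize_sum]
    apply Finset.sum_congr rfl
    intro i _
    rw [homogenize_smul]
    by_cases hi : μ i = 0
    · simp [hi]
    · simp only [if_neg hi]

end Stmt7
namespace Stmt7

noncomputable def dehom (n : ℕ) : MvPolynomial (Fin (n + 1)) ℝ →ₐ[ℝ] MvPolynomial (Fin n) ℝ :=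
  MvPolynomial.aeval (Fin.cases 1 MvPolynomial.X)

theorem dehom_monomial {n : ℕ} (e : Fin (n + 1) →₀ ℕ) (c : ℝ) :
    dehom n (MvPolynomial.monomial e c) = MvPolynomial.monomial (Finsupp.tail e) c := by
  rw [dehom, MvPolynomial.aeval_monomial, MvPolynomial.monomial_eq]
  rw [Finsupp.prod_fintype _ _ (fun i => pow_zero _),
    Finsupp.prod_fintype _ _ (fun i => pow_zero _)]
  rw [Fin.prod_univ_succ]
  simp only [Fin.cases_zero, Fin.cases_succ, one_pow, one_mul, Finsupp.tail_apply,
    MvPolynomial.algebraMap_eq]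

theorem dehom_eq {n : ℕ} (q : MvPolynomial (Fin (n + 1)) ℝ) :
    dehom n q = AddMonoidAlgebra.mapDomainLinearMap ℝ ℝ Finsupp.tail q := by
  conv_lhs => rw [q.as_sum]
  conv_rhs => rw [q.as_sum]
  rw [map_sum, map_sum]
  apply Finset.sum_congr rfl
  intro e he
  rw [dehom_monomial, ← single_eq_monomial, ← single_eq_monomial,
    AddMonoidAlgebra.mapDomainLinearMap_single]

theorem dehom_homogenize {n D : ℕ} (p : MvPolynomial (Fin n) ℝ) :
    dehom n (homogenize n D p) = p := by
  rw [homogenize, map_sum]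
  conv_rhs => rw [p.as_sum]
  apply Finset.sum_congr rfl
  intro m hm
  rw [dehom_monomial]
  rw [Finsupp.tail_cons]

theorem eval_dehom {n : ℕ} (q : MvPolynomial (Fin (n + 1)) ℝ) (x : Fin n → ℝ) :
    MvPolynomial.eval x (dehom n q) = MvPolynomial.eval (Fin.cases 1 x) q := by
  conv_lhs => rw [q.as_sum]
  conv_rhs => rw [q.as_sum]
  rw [map_sum, map_sum, map_sum]
  apply Finset.sum_congr rfl
  intro e he
  rw [dehom_monomial, MvPolynomial.eval_monomial, MvPolynomial.eval_monomial]
  rw [Finsupp.prod_fintype _ _ (fun i => pow_zero _),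
    Finsupp.prod_fintype _ _ (fun i => pow_zero _)]
  rw [Fin.prod_univ_succ]
  simp [Finsupp.tail_apply]

end Stmt7
namespace Stmt7

theorem dg_of_support_homogeneous {N D : ℕ} {P : MvPolynomial (Fin N) ℝ}
    (hP : P.IsHomogeneous D) {u : Fin N →₀ ℕ} (hu : u ∈ P.support) : dg u = D := by
  have h1 := hP (MvPolynomial.mem_support_iff.1 hu)
  show Finsupp.degree u = D
  rw [Finsupp.degree_eq_weight_one]
  exact h1

theorem dg_cons_tail {N : ℕ} (e : Fin (N + 1) →₀ ℕ) : dg e = e 0 + dg (Finsupp.tail e) := by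
  conv_lhs => rw [← Finsupp.cons_tail e]
  rw [dg, Finsupp.sum_cons]
  rfl

theorem slice_injOn {N D : ℕ} :
    Set.InjOn (Finsupp.tail (n := N) (M := ℕ)) {e | dg e = D} := by
  intro a ha b hb h
  simp only [Set.mem_setOf_eq] at ha hb
  have ha' := dg_cons_tail a
  have hb' := dg_cons_tail b
  have h0 : a 0 = b 0 := by rw [ha] at ha'; rw [hb] at hb'; rw [h] at ha'; omega
  rw [← Finsupp.cons_tail a, ← Finsupp.cons_tail b, h, h0]

theorem tail_affineIndependent {N r D : ℕ} {v : Fin (r + 1) → (Fin (N + 1) →₀ ℕ)}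
    (hd : ∀ j, dg (v j) = D)
    (h : AffineIndependent ℝ fun j => expVec (N + 1) (v j)) :
    AffineIndependent ℝ fun j => expVec N (Finsupp.tail (v j)) := by
  rw [affineIndependent_iff] at h ⊢
  intro s w hw h0
  apply h s w hw
  have hv0 : ∀ e, ((v e) 0 : ℝ) = (D : ℝ) - ∑ i : Fin N, ((v e) i.succ : ℝ) := by
    intro e
    have h1 := dg_cast (v e)
    rw [hd e, Fin.sum_univ_succ] at h1
    linarith
  have hsApp : ∀ i : Fin N, ∑ e ∈ s, w e * ((v e) i.succ : ℝ) = 0 := by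
    intro i
    have := congrFun h0 i
    simpa [Finset.sum_apply, expVec, Finsupp.tail_apply] using this
  funext i0
  simp only [Finset.sum_apply, Pi.smul_apply, smul_eq_mul, Pi.zero_apply]
  refine Fin.cases ?_ ?_ i0
  · show ∑ e ∈ s, w e * ((v e) 0 : ℝ) = 0
    simp_rw [hv0, mul_sub, Finset.sum_sub_distrib, ← Finset.sum_mul, hw, zero_mul, zero_sub,
      neg_eq_zero, Finset.mul_sum]
    rw [Finset.sum_comm]
    apply Finset.sum_eq_zero
    intro i _
    exact hsApp i
  · intro i
    show ∑ e ∈ s, w e * ((v e) i.succ : ℝ) = 0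
    exact hsApp i

theorem coeff_dehom {n D : ℕ} {G : MvPolynomial (Fin (n + 1)) ℝ}
    (hS : (G.support : Set (Fin (n + 1) →₀ ℕ)) ⊆ {e | dg e = D})
    {a : Fin (n + 1) →₀ ℕ} (ha : dg a = D) :
    (dehom n G).coeff (Finsupp.tail a) = G.coeff a := by
  rw [dehom_eq]
  exact Finsupp.mapDomain_apply' {e | dg e = D} (AddMonoidAlgebra.coeff G) hS slice_injOn ha

theorem isCircuitWith_dehom {n D r : ℕ} {G : MvPolynomial (Fin (n + 1)) ℝ}
    {α : Fin (r + 1) → (Fin (n + 1) →₀ ℕ)} {β : Fin (n + 1) →₀ ℕ} {lam : Fin (r + 1) → ℝ}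
    (h : IsCircuitWith (n + 1) G r α β lam) (hhom : ∀ j, dg (α j) = D) :
    IsCircuitWith n (dehom n G) r (fun j => Finsupp.tail (α j)) (Finsupp.tail β) lam := by
  obtain ⟨hrn, heven, hai, hlam, hsum, hβ, hcoeffα, hsupp⟩ := h
  have hdgβ : dg β = D := by
    have h1 : (dg β : ℝ) = ∑ j, lam j * (dg (α j) : ℝ) := dg_beta hβ
    have h2 : (dg β : ℝ) = (D : ℝ) := by
      simp_rw [hhom] at h1
      rw [h1, ← Finset.sum_mul, hsum, one_mul]
    exact_mod_cast h2
  have hS : (G.support : Set (Fin (n + 1) →₀ ℕ)) ⊆ {e | dg e = D} := by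
    intro e he
    rcases hsupp he with h | h
    · obtain ⟨j, hj⟩ := h
      simp only [Set.mem_setOf_eq, ← hj]
      exact hhom j
    · simp only [Set.mem_singleton_iff] at h
      simp only [Set.mem_setOf_eq, h]
      exact hdgβ
  have htai : AffineIndependent ℝ fun j => expVec n (Finsupp.tail (α j)) :=
    tail_affineIndependent hhom hai
  have hrn' : r ≤ n := by
    have hcard := htai.card_le_finrank_succ
    have hle : Module.finrank ℝ
        (vectorSpan ℝ (Set.range fun j => expVec n (Finsupp.tail (α j)))) ≤ n := by
      have h1 := Submodule.finrank_le
        (vectorSpan ℝ (Set.range fun j => expVec n (Finsupp.tail (α j))))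
      rwa [Module.finrank_pi ℝ, Fintype.card_fin] at h1
    rw [Fintype.card_fin] at hcard
    omega
  refine ⟨hrn', fun j i => ?_, htai, hlam, hsum, fun i => ?_, fun j => ?_, ?_⟩
  · rw [Finsupp.tail_apply]
    exact heven j i.succ
  · simp_rw [Finsupp.tail_apply]
    exact hβ i.succ
  · rw [coeff_dehom hS (hhom j)]
    exact hcoeffα j
  · intro m hm
    simp only [Finset.mem_coe] at hm
    have hsub : (dehom n G).support ⊆ G.support.image Finsupp.tail := by
      rw [dehom_eq]
      exact Finsupp.mapDomain_support (s := AddMonoidAlgebra.coeff G)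
    obtain ⟨e, he, rfl⟩ := Finset.mem_image.1 (hsub hm)
    rcases hsupp he with h | h
    · obtain ⟨j, hj⟩ := h
      exact Or.inl ⟨j, by simp only []; rw [hj]⟩
    · simp only [Set.mem_singleton_iff] at h
      right
      simp only [Set.mem_singleton_iff, h]

theorem isSONC_of_homogenize {n d : ℕ} {p : MvPolynomial (Fin n) ℝ}
    (hdeg : p.totalDegree ≤ 2 * d)
    (h : IsSONC (n + 1) (homogenize n (2 * d) p)) : IsSONC n p := by
  classical
  obtain ⟨k, μ, G, hμ, hcirc, hnn, hsum⟩ := h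
  have hhom : (homogenize n (2 * d) p).IsHomogeneous (2 * d) := homogenize_isHomogeneous p hdeg
  have hGslice : ∀ i, μ i ≠ 0 → ∀ m ∈ (G i).support, dg m = 2 * d := by
    intro i hi m hm
    obtain ⟨⟨u, hu, h1⟩, ⟨u', hu', h2⟩⟩ := exists_dominating hμ hcirc hsum hi hm
    have e1 : dg u = 2 * d := dg_of_support_homogeneous hhom hu
    have e2 : dg u' = 2 * d := dg_of_support_homogeneous hhom hu'
    omega
  have hp : p = ∑ i, μ i • (if μ i = 0 then 1 else dehom n (G i)) := by
    have h1 : p = dehom n (homogenize n (2 * d) p) := (dehom_homogenize p).symm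
    rw [h1, hsum, map_sum]
    apply Finset.sum_congr rfl
    intro i _
    rw [map_smul]
    by_cases hi : μ i = 0
    · simp [hi]
    · simp only [if_neg hi]
  refine ⟨k, μ, fun i => if μ i = 0 then 1 else dehom n (G i), hμ, ?_, ?_, hp⟩
  · intro i
    by_cases hi : μ i = 0
    · simp only [if_pos hi]
      exact isCircuit_one n
    · simp only [if_neg hi]
      obtain ⟨r, α, β, lam, hC⟩ := hcirc i
      have hα : ∀ j, dg (α j) = 2 * d := by
        intro j
        exact hGslice i hi _ (MvPolynomial.mem_support_iff.2 (hC.2.2.2.2.2.2.1 j).ne')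
      exact ⟨r, _, _, lam, isCircuitWith_dehom hC hα⟩
  · intro i x
    by_cases hi : μ i = 0
    · simp [if_pos hi]
    · simp only [if_neg hi]
      rw [eval_dehom]
      exact hnn i _

end Stmt7

/-- A polynomial `p` of degree at most `2d` in `n` variables is SONC if and
only if its homogenization `p̄` (a homogeneous polynomial of degree `2d` in `n + 1` variables)
is SONC. -/
theorem stmt7 (n d : ℕ) (p : MvPolynomial (Fin n) ℝ) (hdeg : p.totalDegree ≤ 2 * d) :
    (homogenize n (2 * d) p).IsHomogeneous (2 * d) ∧
    (IsSONC n p ↔ IsSONC (n + 1) (homogenize n (2 * d) p)) := by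
  exact ⟨Stmt7.homogenize_isHomogeneous p hdeg,
    ⟨Stmt7.isSONC_homogenize hdeg, Stmt7.isSONC_of_homogenize hdeg⟩⟩
end

section
/- Let f be a nonnegative circuit polynomial of degree at most 2d in n variables with outer exponents α(0),…,α(r), inner exponent β, and barycentric coordinates λ_0,…,λ_r (so β = ∑_j λ_j α(j), λ_j > 0, ∑_j λ_j = 1). Then its homogenization f̄ (homogenized to degree 2d with an extra variable x_0) is a circuit polynomial with outer exponents (2d − |α(j)|, α(j)) and inner exponent (2d − |β|, β), whose barycentric coordinates λ̄_j satisfy λ̄_j = λ_j for all j = 0,…,r; consequently the circuit numbers coincide: Θ_f = Θ_{f̄}. -/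
open MvPolynomial Finset

section Aux

open MvPolynomial Finset

lemma coeff_homogenize (n D : ℕ) (f : MvPolynomial (Fin n) ℝ) (m : Fin n →₀ ℕ) :
    (homogenize n D f).coeff (Finsupp.cons (D - m.sum fun _ e => e) m) = f.coeff m := by
  unfold homogenize
  rw [MvPolynomial.coeff_sum, Finset.sum_eq_single m]
  · rw [MvPolynomial.coeff_monomial, if_pos rfl]
  · intro b _ hb
    rw [MvPolynomial.coeff_monomial, if_neg]
    intro h
    exact hb (by simpa [Finsupp.tail_cons] using congrArg Finsupp.tail h)
  · intro h
    rw [MvPolynomial.coeff_monomial, if_pos rfl]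
    exact MvPolynomial.notMem_support_iff.mp h

lemma mem_support_homogenize (n D : ℕ) (f : MvPolynomial (Fin n) ℝ) {e : Fin (n+1) →₀ ℕ}
    (he : e ∈ (homogenize n D f).support) :
    ∃ m ∈ f.support, e = Finsupp.cons (D - m.sum fun _ e => e) m := by
  rw [MvPolynomial.mem_support_iff] at he
  unfold homogenize at he
  rw [MvPolynomial.coeff_sum] at he
  obtain ⟨m, hm, hne⟩ := Finset.exists_ne_zero_of_sum_ne_zero he
  refine ⟨m, hm, ?_⟩
  rw [MvPolynomial.coeff_monomial] at hne
  by_contra h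
  exact hne (if_neg fun hh => h hh.symm)

lemma finsuppSum_cast (n : ℕ) (m : Fin n →₀ ℕ) :
    ((m.sum fun _ e => e : ℕ) : ℝ) = ∑ i, (m i : ℝ) := by
  rw [Finsupp.sum_fintype _ _ fun _ => rfl]
  push_cast
  rfl

lemma even_finsuppSum (n : ℕ) (m : Fin n →₀ ℕ) (h : ∀ i, Even (m i)) :
    Even (m.sum fun _ e => e) := by
  rw [Finsupp.sum_fintype _ _ fun _ => rfl]
  exact Finset.even_sum _ fun i _ => h i

end Aux

/-- Let `f` be a nonnegative circuit polynomial of degree at most `2d` with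
outer exponents `α j`, inner exponent `β`, and barycentric coordinates `lam`. Then its
homogenization to degree `2d` is a circuit polynomial with outer exponents
`(2d − |α j|, α j)`, inner exponent `(2d − |β|, β)`, and the *same* barycentric coordinates
`lam`; consequently the circuit numbers coincide: `Θ_f = Θ_{f̄}`. -/
theorem stmt8 (n d r : ℕ) (f : MvPolynomial (Fin n) ℝ)
    (α : Fin (r + 1) → (Fin n →₀ ℕ)) (β : Fin n →₀ ℕ) (lam : Fin (r + 1) → ℝ)
    (hf : IsCircuitWith n f r α β lam)
    (hnn : ∀ x : Fin n → ℝ, 0 ≤ eval x f)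
    (hdeg : f.totalDegree ≤ 2 * d) :
    IsCircuitWith (n + 1) (homogenize n (2 * d) f) r
      (fun j => Finsupp.cons (2 * d - (α j).sum fun _ e => e) (α j))
      (Finsupp.cons (2 * d - β.sum fun _ e => e) β) lam ∧
    circuitNumber n f r α lam =
      circuitNumber (n + 1) (homogenize n (2 * d) f) r
        (fun j => Finsupp.cons (2 * d - (α j).sum fun _ e => e) (α j)) lam := by
  obtain ⟨hrn, heven, haff, hlampos, hlamsum, hbary, hcpos, hsupp⟩ := hf
  -- degree bounds
  have hαle : ∀ j, ((α j).sum fun _ e => e) ≤ 2 * d := fun j =>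
    le_trans (MvPolynomial.le_totalDegree (MvPolynomial.mem_support_iff.mpr (hcpos j).ne')) hdeg
  have hβreal : ((β.sum fun _ e => e : ℕ) : ℝ) = ∑ j, lam j * (((α j).sum fun _ e => e : ℕ) : ℝ) := by
    rw [finsuppSum_cast]
    calc (∑ i, (β i : ℝ)) = ∑ i, ∑ j, lam j * ((α j) i : ℝ) := by
          exact Finset.sum_congr rfl fun i _ => hbary i
      _ = ∑ j, ∑ i, lam j * ((α j) i : ℝ) := Finset.sum_comm
      _ = ∑ j, lam j * (((α j).sum fun _ e => e : ℕ) : ℝ) := by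
          refine Finset.sum_congr rfl fun j _ => ?_
          rw [finsuppSum_cast, Finset.mul_sum]
  have hβle : (β.sum fun _ e => e) ≤ 2 * d := by
    have : ((β.sum fun _ e => e : ℕ) : ℝ) ≤ ((2 * d : ℕ) : ℝ) := by
      rw [hβreal]
      calc (∑ j, lam j * (((α j).sum fun _ e => e : ℕ) : ℝ))
          ≤ ∑ j, lam j * ((2 * d : ℕ) : ℝ) := by
            refine Finset.sum_le_sum fun j _ => ?_
            exact mul_le_mul_of_nonneg_left (by exact_mod_cast hαle j) (hlampos j).le
        _ = ((2 * d : ℕ) : ℝ) := by rw [← Finset.sum_mul, hlamsum, one_mul]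
    exact_mod_cast this
  have hcoeff : ∀ j, (homogenize n (2 * d) f).coeff
      (Finsupp.cons (2 * d - (α j).sum fun _ e => e) (α j)) = f.coeff (α j) :=
    fun j => coeff_homogenize n (2 * d) f (α j)
  refine ⟨⟨hrn.trans (Nat.le_succ n), ?_, ?_, hlampos, hlamsum, ?_, ?_, ?_⟩, ?_⟩
  · -- evenness
    intro j i
    refine Fin.cases ?_ (fun i => ?_) i
    · rw [Finsupp.cons_zero]
      have h1 : Even ((α j).sum fun _ e => e) := even_finsuppSum n (α j) (heven j)
      obtain ⟨a, ha⟩ := h1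
      exact ⟨d - a, by omega⟩
    · rw [Finsupp.cons_succ]; exact heven j i
  · -- affine independence
    apply AffineIndependent.of_comp
      ((LinearMap.funLeft ℝ ℝ (Fin.succ : Fin n → Fin (n + 1))).toAffineMap)
    have : ((LinearMap.funLeft ℝ ℝ (Fin.succ : Fin n → Fin (n + 1))).toAffineMap ∘
        fun j => expVec (n + 1) (Finsupp.cons (2 * d - (α j).sum fun _ e => e) (α j))) =
        fun j => expVec n (α j) := by
      funext j
      funext i
      simp [expVec, LinearMap.funLeft, Finsupp.cons_succ]
    rw [this]
    exact haff
  · -- barycentric coordinates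
    intro i
    refine Fin.cases ?_ (fun i => ?_) i
    · rw [Finsupp.cons_zero]
      have hcast : ∀ j, ((2 * d - ((α j).sum fun _ e => e) : ℕ) : ℝ) =
          ((2 * d : ℕ) : ℝ) - (((α j).sum fun _ e => e : ℕ) : ℝ) := fun j =>
        Nat.cast_sub (hαle j)
      rw [Nat.cast_sub hβle]
      calc ((2 * d : ℕ) : ℝ) - ((β.sum fun _ e => e : ℕ) : ℝ)
          = (∑ j, lam j) * ((2 * d : ℕ) : ℝ) - ∑ j, lam j * (((α j).sum fun _ e => e : ℕ) : ℝ) := by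
            rw [hlamsum, one_mul, hβreal]
        _ = ∑ j, lam j * (((2 * d : ℕ) : ℝ) - (((α j).sum fun _ e => e : ℕ) : ℝ)) := by
            rw [Finset.sum_mul, ← Finset.sum_sub_distrib]
            exact Finset.sum_congr rfl fun j _ => (mul_sub _ _ _).symm
        _ = ∑ j, lam j * (((fun j => Finsupp.cons (2 * d - (α j).sum fun _ e => e) (α j)) j 0 : ℕ) : ℝ) := by
            refine Finset.sum_congr rfl fun j _ => ?_
            rw [Finsupp.cons_zero, hcast j]
    · simp only [Finsupp.cons_succ]
      exact hbary i
  · -- positive coefficients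
    intro j
    rw [hcoeff j]
    exact hcpos j
  · -- support
    intro e he
    obtain ⟨m, hm, rfl⟩ := mem_support_homogenize n (2 * d) f he
    rcases hsupp hm with ⟨j, rfl⟩ | hm'
    · exact Or.inl ⟨j, rfl⟩
    · exact Or.inr (by simp_all)
  · -- circuit numbers
    unfold circuitNumber
    exact Finset.prod_congr rfl fun j _ => by rw [hcoeff j]
end

section
/- Let f be a proper nondegenerate nonnegative circuit polynomial in n variables of degree 2d lying on the boundary of C_{n,2d}; equivalently, with f_β = −Θ_f if β ∈ (2ℕ)^n, and f_β ∈ {−Θ_f, Θ_f} if β ∉ (2ℕ)^n. Then the number of zeros of f in (ℝ∖{0})^n is exactly 2^n if β ∈ (2ℕ)^n, and exactly 2^{n−1} if β ∉ (2ℕ)^n. -/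
open MvPolynomial Finset

namespace Stmt11Aux
open Finset

lemma exp_jensen {m : ℕ} (w t : Fin m → ℝ) (hw : ∀ j, 0 < w j) (h1 : ∑ j, w j = 1) :
    Real.exp (∑ j, w j * t j) ≤ ∑ j, w j * Real.exp (t j) := by
  have := convexOn_exp.map_sum_le (t := Finset.univ) (w := w) (p := t)
    (fun i _ => (hw i).le) h1 (fun i _ => Set.mem_univ _)
  simpa using this

lemma exp_jensen_eq {m : ℕ} (w t : Fin m → ℝ) (hw : ∀ j, 0 < w j)
    (h1 : ∑ j, w j = 1) (heq : ∑ j, w j * Real.exp (t j) ≤ Real.exp (∑ j, w j * t j)) :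
    ∀ j k, t j = t k := by
  have := strictConvexOn_exp.eq_of_le_map_sum (fun i _ => hw i) h1
    (fun i _ => Set.mem_univ _) (by simpa using heq)
  exact fun j k => this (Finset.mem_univ j) (Finset.mem_univ k)

lemma prod_pow_eq {n : ℕ} (x : Fin n → ℝ) (hx : ∀ i, x i ≠ 0) (m : Fin n → ℕ) :
    ∏ i, x i ^ m i = (∏ i, (if 0 < x i then (1:ℝ) else -1) ^ m i) *
      Real.exp (∑ i, (m i : ℝ) * Real.log |x i|) := by
  rw [Real.exp_sum, ← Finset.prod_mul_distrib]
  refine Finset.prod_congr rfl fun i _ => ?_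
  have hexp : Real.exp ((m i : ℝ) * Real.log |x i|) = |x i| ^ m i := by
    rw [Real.exp_nat_mul, Real.exp_log (abs_pos.2 (hx i))]
  rw [hexp, ← mul_pow]
  congr 1
  by_cases h : 0 < x i
  · simp [h, abs_of_pos h]
  · have hlt : x i < 0 := lt_of_le_of_ne (not_lt.1 h) (hx i)
    simp [h, abs_of_neg hlt]

lemma prod_sign_mem {n : ℕ} (b : Fin n → ℝ) (hb : ∀ i, b i = 1 ∨ b i = -1) (m : Fin n → ℕ) :
    (∏ i, b i ^ m i) = 1 ∨ (∏ i, b i ^ m i) = -1 := by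
  rw [← abs_eq (zero_le_one), Finset.abs_prod]
  refine Finset.prod_eq_one fun i _ => ?_
  rw [abs_pow]
  rcases hb i with h | h <;> simp [h]


open Finset in
lemma card_signs_odd {n : ℕ} (β : Fin n → ℕ) (i0 : Fin n) (hodd : ¬ Even (β i0)) (ε : ℝ)
    (hε : ε = 1 ∨ ε = -1) :
    Nat.card {b : Fin n → Bool // ∏ i, (if b i then (1:ℝ) else -1) ^ β i = ε} = 2 ^ (n - 1) := by
  classical
  set σ : (Fin n → Bool) → ℝ := fun b => ∏ i, (if b i then (1:ℝ) else -1) ^ β i with hσdef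
  have hσpm : ∀ b, σ b = 1 ∨ σ b = -1 := fun b =>
    prod_sign_mem _ (fun i => by by_cases h : b i <;> simp [h]) _
  have hodd' : Odd (β i0) := Nat.not_even_iff_odd.1 hodd
  set e : (Fin n → Bool) → (Fin n → Bool) := fun b => Function.update b i0 (!b i0) with hedef
  have hflip : ∀ b, σ (e b) = -σ b := by
    intro b
    have h1 : ∀ b' : Fin n → Bool, σ b' =
        (∏ i ∈ Finset.univ.erase i0, (if b' i then (1:ℝ) else -1) ^ β i) *
          (if b' i0 then (1:ℝ) else -1) ^ β i0 := fun b' =>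
      (Finset.prod_erase_mul _ _ (Finset.mem_univ i0)).symm
    rw [h1, h1]
    have hsame : ∏ i ∈ Finset.univ.erase i0, (if e b i then (1:ℝ) else -1) ^ β i
        = ∏ i ∈ Finset.univ.erase i0, (if b i then (1:ℝ) else -1) ^ β i :=
      Finset.prod_congr rfl fun i hi => by
        rw [hedef]
        simp only [Function.update_of_ne (Finset.ne_of_mem_erase hi)]
    rw [hsame]
    have he0 : e b i0 = !b i0 := by rw [hedef]; simp
    rw [he0]
    cases hb : b i0 <;> simp [hodd'.neg_one_pow]
  have hinv : ∀ b, e (e b) = b := by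
    intro b; funext i
    by_cases h : i = i0
    · subst h; simp [hedef]
    · simp [hedef, Function.update_of_ne h]
  have hiff : ∀ b, (σ b = -ε ↔ ¬ σ b = ε) := by
    intro b
    rcases hσpm b with h | h <;> rcases hε with h2 | h2 <;> rw [h, h2] <;> norm_num
  have hcard1 : Fintype.card {b // σ b = ε} = Fintype.card {b // σ b = -ε} :=
    Fintype.card_congr
      { toFun := fun p => ⟨e p.1, by rw [hflip, p.2]⟩
        invFun := fun p => ⟨e p.1, by rw [hflip, p.2, neg_neg]⟩
        left_inv := fun p => Subtype.ext (hinv p.1)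
        right_inv := fun p => Subtype.ext (hinv p.1) }
  have hcard2 : Fintype.card {b // σ b = -ε} = Fintype.card {b : Fin n → Bool // ¬ σ b = ε} :=
    Fintype.card_congr (Equiv.subtypeEquivRight hiff)
  have hcompl : Fintype.card {b : Fin n → Bool // ¬ σ b = ε}
      = Fintype.card (Fin n → Bool) - Fintype.card {b // σ b = ε} :=
    Fintype.card_subtype_compl _
  have htot : Fintype.card (Fin n → Bool) = 2 ^ n := by simp
  have hle : Fintype.card {b // σ b = ε} ≤ 2 ^ n := by
    rw [← htot]; exact Fintype.card_subtype_le _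
  have hn : 0 < n := i0.pos
  have hn2 : 2 ^ n = 2 ^ (n - 1) * 2 := by rw [← pow_succ, Nat.sub_add_cancel hn]
  have hN : Nat.card {b : Fin n → Bool // σ b = ε}
      = Fintype.card {b : Fin n → Bool // σ b = ε} := Nat.card_eq_fintype_card
  rw [hN]
  omega

open MvPolynomial Finset Matrix

theorem key (n : ℕ) (hn : 0 < n) (f : MvPolynomial (Fin n) ℝ)
    (α : Fin (n + 1) → (Fin n →₀ ℕ)) (β : Fin n →₀ ℕ) (lam : Fin (n + 1) → ℝ) (ε : ℝ)
    (heven : ∀ j i, Even (α j i))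
    (hAI : AffineIndependent ℝ (fun j => expVec n (α j)))
    (hlam : ∀ j, 0 < lam j) (hlam1 : (∑ j, lam j) = 1)
    (hβ : ∀ i, (β i : ℝ) = ∑ j, lam j * ((α j) i : ℝ))
    (hc : ∀ j, 0 < f.coeff (α j))
    (hsupp : (f.support : Set (Fin n →₀ ℕ)) ⊆ Set.range α ∪ {β})
    (hε : ε = 1 ∨ ε = -1)
    (hfβ : f.coeff β = ε * circuitNumber n f n α lam) :
    ∃ v : Fin n → ℝ, (∀ i, 0 < v i) ∧
      affZerosStar n f =
        (fun b : Fin n → Bool => fun i => (if b i then 1 else -1) * v i) ''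
          {b | ∏ i, (if b i then (1:ℝ) else -1) ^ β i = -ε} := by
  classical
  set c : Fin (n+1) → ℝ := fun j => f.coeff (α j) with hcdef
  set Θ : ℝ := circuitNumber n f n α lam with hΘdef
  have hΘ : 0 < Θ := Finset.prod_pos fun j _ =>
    Real.rpow_pos_of_pos (div_pos (hc j) (hlam j)) _
  have hεne : ε ≠ 0 := by rcases hε with h | h <;> simp [h]
  have hlogΘ : Real.log Θ = ∑ j, lam j * Real.log (c j / lam j) := by
    have hrpow : ∀ a b : ℝ, Real.rpow a b = a ^ b := fun _ _ => rfl
    rw [hΘdef, circuitNumber]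
    simp only [hrpow]
    rw [Real.log_prod
      (fun j _ => ne_of_gt (Real.rpow_pos_of_pos (div_pos (hc j) (hlam j)) _))]
    exact Finset.sum_congr rfl fun j _ =>
      Real.log_rpow (div_pos (hc j) (hlam j)) _
  have hαinj : Function.Injective α := by
    intro j k h
    exact hAI.injective (show (fun j => expVec n (α j)) j = (fun j => expVec n (α j)) k by
      simp only [h])
  have hβne : ∀ j0, β ≠ α j0 := by
    intro j0 h
    have hw2sum : ∑ k : Fin (n+1), (if k = j0 then (1:ℝ) else 0) = 1 := by simp
    have hcombβ : Finset.univ.affineCombination ℝ (fun j => expVec n (α j)) lam =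
        Finset.univ.affineCombination ℝ (fun j => expVec n (α j))
          (fun k => if k = j0 then (1:ℝ) else 0) := by
      rw [Finset.affineCombination_eq_linear_combination _ _ _ hlam1,
        Finset.univ.affineCombination_of_eq_one_of_eq_zero
          (fun k => if k = j0 then (1:ℝ) else 0) (fun j => expVec n (α j))
          (Finset.mem_univ j0) (by simp) (fun k _ hk => by simp [hk])]
      funext i
      have := (hβ i).symm
      rw [h] at this
      simpa [expVec] using this
    have := (affineIndependent_iff_eq_of_fintype_affineCombination_eq ℝ _).mp hAI
      lam (fun k => if k = j0 then (1:ℝ) else 0) hlam1 hw2sum hcombβ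
    have hnontriv : Nontrivial (Fin (n+1)) :=
      ⟨⟨0, ⟨1, by omega⟩, by simp [Fin.ext_iff]⟩⟩
    obtain ⟨j1, hj1⟩ := exists_ne j0
    have := congrFun this j1
    simp [hj1] at this
    exact absurd this (ne_of_gt (hlam j1))
  have hβmem : β ∉ Finset.image α Finset.univ := by
    intro hmem
    obtain ⟨j, _, hj⟩ := Finset.mem_image.1 hmem
    exact hβne j hj.symm
  have hsupp_eq : f.support = Finset.image α Finset.univ ∪ {β} := by
    apply Finset.Subset.antisymm
    · intro m hm
      rcases hsupp hm with ⟨j, rfl⟩ | hm2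
      · exact Finset.mem_union_left _ (Finset.mem_image_of_mem α (Finset.mem_univ j))
      · exact Finset.mem_union_right _ (by simpa using hm2)
    · intro m hm
      rcases Finset.mem_union.1 hm with hm1 | hm2
      · obtain ⟨j, _, rfl⟩ := Finset.mem_image.1 hm1
        exact MvPolynomial.mem_support_iff.2 (ne_of_gt (hc j))
      · rw [Finset.mem_singleton.1 hm2]
        exact MvPolynomial.mem_support_iff.2 (by rw [hfβ]; exact mul_ne_zero hεne (ne_of_gt hΘ))
  have heval : ∀ x : Fin n → ℝ, eval x f =
      (∑ j, c j * ∏ i, x i ^ (α j i)) + f.coeff β * ∏ i, x i ^ (β i) := by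
    intro x
    rw [MvPolynomial.eval_eq', hsupp_eq, Finset.sum_union (by
      simp only [Finset.disjoint_singleton_right]; exact hβmem),
      Finset.sum_image (fun j _ k _ h => hαinj h), Finset.sum_singleton]
  -- linear algebra: the matrix of exponent differences is invertible
  have hLI : LinearIndependent ℝ
      (fun j : Fin n => (expVec n (α (Fin.succ j))) - expVec n (α 0)) := by
    have h1 := (affineIndependent_iff_linearIndependent_vsub ℝ
      (fun j => expVec n (α j)) 0).mp hAI
    have h2 := h1.comp
      (fun j : Fin n => (⟨Fin.succ j, Fin.succ_ne_zero j⟩ : {x : Fin (n+1) // x ≠ 0}))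
      (fun j k h => Fin.succ_injective n (by simpa using congrArg Subtype.val h))
    exact h2
  set M : Matrix (Fin n) (Fin n) ℝ :=
    Matrix.of (fun j i => ((α (Fin.succ j) i : ℝ) - (α 0 i : ℝ))) with hMdef
  have hMrows : LinearIndependent ℝ (fun j => M j) := hLI
  have hMunit : IsUnit M := Matrix.linearIndependent_rows_iff_isUnit.mp hMrows
  have hMdet : IsUnit M.det := (Matrix.isUnit_iff_isUnit_det M).mp hMunit
  set b0 : Fin n → ℝ := fun j =>
    Real.log (c 0 / lam 0) - Real.log (c (Fin.succ j) / lam (Fin.succ j)) with hb0def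
  set ystar : Fin n → ℝ := M⁻¹ *ᵥ b0 with hystardef
  have hy : M *ᵥ ystar = b0 := by
    rw [hystardef, Matrix.mulVec_mulVec, Matrix.mul_nonsing_inv _ hMdet, Matrix.one_mulVec]
  have hMinj : Function.Injective (M.mulVec) := Matrix.mulVec_injective_iff_isUnit.mpr hMunit
  set v : Fin n → ℝ := fun i => Real.exp (ystar i) with hvdef
  have hv : ∀ i, 0 < v i := fun i => Real.exp_pos _
  have hexpand : ∀ (z : Fin n → ℝ) (j : Fin n), (M *ᵥ z) j =
      (∑ i, (α (Fin.succ j) i : ℝ) * z i) - ∑ i, (α 0 i : ℝ) * z i := by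
    intro z j
    simp [Matrix.mulVec, dotProduct, hMdef, sub_mul, Finset.sum_sub_distrib]
  -- the pointwise characterization of zeros
  have hchar : ∀ x : Fin n → ℝ, (∀ i, x i ≠ 0) →
      (eval x f = 0 ↔ ((∀ i, |x i| = v i) ∧
        (∏ i, (if 0 < x i then (1:ℝ) else -1) ^ β i) = -ε)) := by
    intro x hx
    set y : Fin n → ℝ := fun i => Real.log |x i| with hydef2
    set σ : ℝ := ∏ i, (if 0 < x i then (1:ℝ) else -1) ^ β i with hσdef
    set t : Fin (n+1) → ℝ :=
      fun j => Real.log (c j / lam j) + ∑ i, (α j i : ℝ) * y i with htdef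
    have hterm : ∀ j, c j * ∏ i, x i ^ (α j i) = lam j * Real.exp (t j) := by
      intro j
      rw [prod_pow_eq x hx]
      have hsg : (∏ i, (if 0 < x i then (1:ℝ) else -1) ^ (α j i)) = 1 := by
        refine Finset.prod_eq_one fun i _ => ?_
        by_cases h : 0 < x i
        · simp [h]
        · simp only [h, if_false]
          exact Even.neg_one_pow (heven j i)
      rw [hsg, one_mul]
      simp only [htdef, hydef2]
      rw [Real.exp_add, Real.exp_log (div_pos (hc j) (hlam j))]
      field_simp
      rw [mul_div_cancel_left₀ _ (ne_of_gt (hlam j))]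
    have h2 : ∑ j, lam j * ∑ i, (α j i : ℝ) * y i = ∑ i, (β i : ℝ) * y i := by
      simp only [Finset.mul_sum]
      rw [Finset.sum_comm]
      refine Finset.sum_congr rfl fun i _ => ?_
      rw [hβ i, Finset.sum_mul]
      exact Finset.sum_congr rfl fun j _ => by ring
    have hsum : ∑ j, lam j * t j = Real.log Θ + ∑ i, (β i : ℝ) * y i := by
      simp only [htdef, mul_add]
      rw [Finset.sum_add_distrib, hlogΘ, h2]
    have hβterm : f.coeff β * ∏ i, x i ^ (β i) =
        ε * σ * Real.exp (∑ j, lam j * t j) := by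
      rw [prod_pow_eq x hx, hfβ, hsum]
      simp only [hydef2]
      rw [Real.exp_add, Real.exp_log hΘ, ← hσdef]
      ring
    have heval2 : eval x f =
        ∑ j, lam j * Real.exp (t j) + ε * σ * Real.exp (∑ j, lam j * t j) := by
      rw [heval x, hβterm]
      congr 1
      exact Finset.sum_congr rfl fun j _ => hterm j
    have hσ1 : σ = 1 ∨ σ = -1 :=
      prod_sign_mem _ (fun i => by by_cases h : 0 < x i <;> simp [h]) _
    have hpos : 0 < ∑ j, lam j * Real.exp (t j) :=
      Finset.sum_pos (fun j _ => mul_pos (hlam j) (Real.exp_pos _)) Finset.univ_nonempty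
    constructor
    · intro h0
      have h0' := h0
      rw [heval2] at h0'
      have hεσ : ε * σ = -1 := by
        have hne : ε * σ = 1 ∨ ε * σ = -1 := by
          rcases hε with h1 | h1 <;> rcases hσ1 with h2 | h2 <;> rw [h1, h2] <;> norm_num
        rcases hne with h1 | h1
        · exfalso
          rw [h1, one_mul] at h0'
          have := Real.exp_pos (∑ j, lam j * t j)
          linarith
        · exact h1
      have hσε : σ = -ε := by
        rcases hε with h | h <;> rw [h] at hεσ ⊢ <;> linarith
      rw [hεσ, neg_one_mul] at h0'
      have heq : ∑ j, lam j * Real.exp (t j) ≤ Real.exp (∑ j, lam j * t j) := by linarith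
      have htconst := exp_jensen_eq lam t hlam hlam1 heq
      have hMy : M *ᵥ y = b0 := by
        funext j
        have ht0 := htconst (Fin.succ j) 0
        simp only [htdef] at ht0
        rw [hexpand, hb0def]
        linarith
      have hyy : y = ystar := hMinj (by rw [hy, hMy])
      refine ⟨fun i => ?_, hσε⟩
      calc |x i| = Real.exp (y i) := by
            rw [hydef2]
            exact (Real.exp_log (abs_pos.2 (hx i))).symm
        _ = v i := by rw [hyy, hvdef]
    · rintro ⟨habs, hσε⟩
      have hyy : y = ystar := by
        funext i
        have he1 : Real.exp (y i) = Real.exp (ystar i) := by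
          rw [hydef2]
          simp only []
          rw [Real.exp_log (abs_pos.2 (hx i)), habs i, hvdef]
        exact Real.exp_injective he1
      have htconst : ∀ j, t j = t 0 := by
        intro j
        induction j using Fin.cases with
        | zero => rfl
        | succ j =>
          have hMyj : (M *ᵥ ystar) j = b0 j := by rw [hy]
          rw [hexpand, hb0def] at hMyj
          simp only [htdef, hyy]
          linarith
      rw [heval2, hσε]
      have hs1 : ∑ j, lam j * Real.exp (t j) = Real.exp (t 0) := by
        rw [Finset.sum_congr rfl (fun j _ => by rw [htconst j]), ← Finset.sum_mul, hlam1, one_mul]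
      have hs2 : ∑ j, lam j * t j = t 0 := by
        rw [Finset.sum_congr rfl (fun j _ => by rw [htconst j]), ← Finset.sum_mul, hlam1, one_mul]
      rw [hs1, hs2]
      rcases hε with h | h <;> rw [h] <;> ring
  -- conclude: the zero set is the claimed image
  refine ⟨v, hv, ?_⟩
  apply Set.eq_of_subset_of_subset
  · rintro x ⟨hx, hx0⟩
    obtain ⟨habs, hσ⟩ := (hchar x hx).1 hx0
    refine ⟨fun i => decide (0 < x i), ?_, ?_⟩
    · show (∏ i, (if decide (0 < x i) then (1:ℝ) else -1) ^ β i) = -ε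
      rw [Finset.prod_congr rfl (fun i _ => by
        by_cases h : 0 < x i <;> simp [h] :
        ∀ i ∈ Finset.univ, (if decide (0 < x i) then (1:ℝ) else -1) ^ β i
          = (if 0 < x i then (1:ℝ) else -1) ^ β i)]
      exact hσ
    · funext i
      show (if (decide (0 < x i)) = true then (1:ℝ) else -1) * v i = x i
      by_cases h : 0 < x i
      · rw [← habs i, abs_of_pos h, if_pos (by simp [h]), one_mul]
      · have hlt : x i < 0 := lt_of_le_of_ne (not_lt.1 h) (hx i)
        rw [← habs i, abs_of_neg hlt, if_neg (by simp [h]), neg_one_mul, neg_neg]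
  · rintro x ⟨b, hb, rfl⟩
    have hx : ∀ i, (if b i then (1:ℝ) else -1) * v i ≠ 0 := fun i =>
      mul_ne_zero (by by_cases h : b i <;> simp [h]) (ne_of_gt (hv i))
    refine ⟨hx, ?_⟩
    apply (hchar _ hx).2
    refine ⟨fun i => ?_, ?_⟩
    · rw [abs_mul, abs_of_pos (hv i)]
      by_cases h : b i <;> simp [h]
    · have hsg : ∀ i, (if 0 < (if b i then (1:ℝ) else -1) * v i then (1:ℝ) else -1)
          = (if b i then (1:ℝ) else -1) := by
        intro i
        by_cases h : b i
        · rw [if_pos h, if_pos (show (0:ℝ) < 1 * v i by rw [one_mul]; exact hv i)]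
        · have hneg : (-1:ℝ) * v i < 0 := by nlinarith [hv i]
          rw [if_neg h, if_neg (not_lt.2 hneg.le)]
      rw [Finset.prod_congr rfl (fun i _ => by rw [hsg i])]
      exact hb



end Stmt11Aux

/-- Let `f` be a proper nondegenerate nonnegative circuit polynomial of
degree `2d` on the boundary of `C_{n,2d}` (equivalently, `f_β = −Θ_f` if `β ∈ (2ℕ)^n`, and
`f_β ∈ {−Θ_f, Θ_f}` if `β ∉ (2ℕ)^n`). Then the number of zeros of `f` in `(ℝ∖{0})^n` is
exactly `2^n` if `β ∈ (2ℕ)^n` and exactly `2^{n−1}` if `β ∉ (2ℕ)^n`. -/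
theorem stmt11 (n d r : ℕ) (f : MvPolynomial (Fin n) ℝ)
    (α : Fin (r + 1) → (Fin n →₀ ℕ)) (β : Fin n →₀ ℕ) (lam : Fin (r + 1) → ℝ)
    (hf : IsCircuitWith n f r α β lam)
    (hproper : ¬ IsSumMonomialSquares n f)
    (hnd : Nondegenerate n f)
    (hdeg : f.totalDegree = 2 * d)
    (hnn : ∀ x : Fin n → ℝ, 0 ≤ eval x f)
    (hb1 : (∀ i, Even (β i)) → f.coeff β = - circuitNumber n f r α lam)
    (hb2 : (¬ ∀ i, Even (β i)) →
      (f.coeff β = circuitNumber n f r α lam ∨ f.coeff β = - circuitNumber n f r α lam)) :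
    ((∀ i, Even (β i)) →
      (affZerosStar n f).Finite ∧ (affZerosStar n f).ncard = 2 ^ n) ∧
    ((¬ ∀ i, Even (β i)) →
      (affZerosStar n f).Finite ∧ (affZerosStar n f).ncard = 2 ^ (n - 1)) := by
  classical
  obtain ⟨hrn, heven, hAI, hlam, hlam1, hβc, hcpos, hsupp⟩ := hf
  -- the outer exponents affinely span everything
  have hrange : affineSpan ℝ (Set.range fun j => expVec n (α j)) = ⊤ := by
    refine le_antisymm le_top ?_
    rw [← hnd]
    refine affineSpan_le.2 ?_
    rintro p ⟨m, hm, rfl⟩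
    rcases hsupp hm with ⟨j, rfl⟩ | hm2
    · exact subset_affineSpan ℝ _ ⟨j, rfl⟩
    · have hm2' : m = β := hm2
      subst hm2'
      have hcomb : expVec n m = Finset.univ.affineCombination ℝ (fun j => expVec n (α j)) lam := by
        rw [Finset.affineCombination_eq_linear_combination _ _ _ hlam1]
        funext i
        simpa [expVec] using hβc i
      rw [hcomb]
      exact affineCombination_mem_affineSpan hlam1 _
  have hr : r = n := by
    have h1 := hAI.finrank_vectorSpan (Fintype.card_fin (r + 1))
    have h2 : vectorSpan ℝ (Set.range fun j => expVec n (α j)) = ⊤ := by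
      rw [← direction_affineSpan, hrange]
      exact AffineSubspace.direction_top ℝ _ _
    rw [h2, finrank_top] at h1
    rw [← h1]
    simp
  subst hr
  -- the circuit number is positive
  have hΘ : 0 < circuitNumber r f r α lam :=
    Finset.prod_pos fun j _ => Real.rpow_pos_of_pos (div_pos (hcpos j) (hlam j)) _
  rcases Nat.eq_zero_or_pos r with hn0 | hn
  · -- degenerate case r = n = 0 is impossible
    exfalso
    subst hn0
    have : Unique (Fin 0 →₀ ℕ) := Finsupp.uniqueOfLeft
    have hβeq : β = α 0 := Subsingleton.elim _ _
    have hev : ∀ i : Fin 0, Even (β i) := fun i => i.elim0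
    have h1 := hb1 hev
    rw [hβeq] at h1
    have := hcpos 0
    rw [h1] at this
    linarith
  -- extract the boundary coefficient
  obtain ⟨ε, hε, hfβ⟩ : ∃ ε : ℝ, (ε = 1 ∨ ε = -1) ∧
      f.coeff β = ε * circuitNumber r f r α lam := by
    by_cases hev : ∀ i, Even (β i)
    · exact ⟨-1, Or.inr rfl, by rw [hb1 hev]; ring⟩
    · rcases hb2 hev with h | h
      · exact ⟨1, Or.inl rfl, by rw [h]; ring⟩
      · exact ⟨-1, Or.inr rfl, by rw [h]; ring⟩
  obtain ⟨v, hv, hset⟩ := Stmt11Aux.key r hn f α β lam ε heven hAI hlam hlam1 hβc hcpos hsupp hε hfβ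
  have hφinj : Function.Injective
      (fun b : Fin r → Bool => fun i => (if b i then (1:ℝ) else -1) * v i) := by
    intro b b' h
    funext i
    have hi := congrFun h i
    simp only [] at hi
    by_cases h1 : b i <;> by_cases h2 : b' i
    · rw [h1, h2]
    · exfalso; rw [if_pos h1, if_neg h2] at hi; nlinarith [hv i]
    · exfalso; rw [if_neg h1, if_pos h2] at hi; nlinarith [hv i]
    · rw [Bool.not_eq_true] at h1 h2
      rw [h1, h2]
  have hfin : (affZerosStar r f).Finite := by
    rw [hset]; exact Set.Finite.image _ (Set.toFinite _)
  have hncard : (affZerosStar r f).ncard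
      = Nat.card {b : Fin r → Bool // ∏ i, (if b i then (1:ℝ) else -1) ^ β i = -ε} := by
    rw [hset, Set.ncard_image_of_injective _ hφinj, ← Nat.card_coe_set_eq]
    rfl
  constructor
  · intro hev
    have hε1 : ε = -1 := by
      have h1 := hb1 hev
      rw [hfβ] at h1
      have h2 : ε * circuitNumber r f r α lam = -1 * circuitNumber r f r α lam := by
        rw [h1]; ring
      exact mul_right_cancel₀ (ne_of_gt hΘ) h2
    refine ⟨hfin, ?_⟩
    have hall : ∀ b : Fin r → Bool,
        ∏ i, (if b i then (1:ℝ) else -1) ^ β i = -ε := by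
      intro b
      rw [hε1, neg_neg]
      exact Finset.prod_eq_one fun i _ => by
        by_cases h : b i
        · simp [h]
        · rw [if_neg h]; exact Even.neg_one_pow (hev i)
    rw [hncard, Nat.card_congr (Equiv.subtypeUnivEquiv hall)]
    simp [Nat.card_eq_fintype_card]
  · intro hodd
    push_neg at hodd
    obtain ⟨i0, hi0⟩ := hodd
    refine ⟨hfin, ?_⟩
    rw [hncard]
    exact Stmt11Aux.card_signs_odd (fun i => β i) i0 hi0 (-ε)
      (by rcases hε with h | h <;> rw [h] <;> norm_num)
end
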